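/- arXiv:2106.01742 — 12 statements merged into one kernel-verified Lean document; each statement's English description precedes it below -/
import Mathlib

section
/- Let p < q be primes and write (Φ_{pq}(x) - 1)/(x - 1) = Σ_i b_i x^i (this quotient is a polynomial since Φ_{pq}(1) = 1). Then for every i ≥ 0, b_i = 0 if the equation αp + βq = i has a solution in non-negative integers (α, β), and b_i = 1 otherwise. -/
/-!
Expanding `Φ_q (X - 1) = X ^ q - 1` by `X ↦ X ^ p` gives
`Φ_{pq} (X ^ p - 1) (X ^ q - 1) = (X ^ {pq} - 1) (X - 1)`. By coprimality the numbers `a p + b q`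
with `a < q`, `b < p` are pairwise distinct, and they are exactly the representable `n` for which
`n - pq` is not representable (reduce `a` mod `q`). Since every `n ≥ pq` is representable, comparing
generating polynomials gives `Φ_{pq} = 1 + (X - 1) ∑ X ^ n` over the non-representable `n`.
-/

open scoped Classical

open Polynomial

namespace CyclotomicPQ

open Finset

def Representable (p q n : ℕ) : Prop := ∃ α β : ℕ, α * p + β * q = n

variable {p q : ℕ}

lemma exists_repr_fst_lt (hq : 0 < q) {α β n : ℕ} (h : α * p + β * q = n) :
    ∃ a b : ℕ, a < q ∧ β ≤ b ∧ a * p + b * q = n := by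
  refine ⟨α % q, β + α / q * p, Nat.mod_lt _ hq, Nat.le_add_right _ _, ?_⟩
  rw [← h]
  conv_rhs => rw [← Nat.mod_add_div α q]
  ring

lemma eq_of_repr_eq (hc : p.Coprime q) {a a' b b' : ℕ} (ha : a < q) (ha' : a' < q)
    (h : a * p + b * q = a' * p + b' * q) : a = a' ∧ b = b' := by
  have hmod : a * p ≡ a' * p [MOD q] := by
    unfold Nat.ModEq
    rw [← Nat.add_mul_mod_self_right (a * p) b q, h, Nat.add_mul_mod_self_right]
  have ha_eq : a = a' := by
    simpa [Nat.ModEq, Nat.mod_eq_of_lt ha, Nat.mod_eq_of_lt ha'] using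
      hmod.cancel_right_of_coprime hc.symm
  subst ha_eq
  exact ⟨rfl, Nat.eq_of_mul_eq_mul_right (by omega) (Nat.add_left_cancel h)⟩

lemma representable_of_mul_le (hc : p.Coprime q) (hp : 1 < p) (hq : 1 < q) {n : ℕ}
    (hn : p * q ≤ n) : Representable p q n := by
  by_contra h
  have hfrob := (frobeniusNumber_pair hc hp hq).2
    (show n ∉ AddSubmonoid.closure {p, q} by
      simpa [AddSubmonoid.mem_closure_pair, Representable] using h)
  have := Nat.add_le_mul hp hq
  omega

def boundedReprs (p q : ℕ) : Finset ℕ :=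
  (range q ×ˢ range p).image fun ab => ab.1 * p + ab.2 * q

lemma mem_boundedReprs {n : ℕ} :
    n ∈ boundedReprs p q ↔ ∃ a b : ℕ, a < q ∧ b < p ∧ a * p + b * q = n := by
  simp [boundedReprs, and_assoc]

lemma mem_boundedReprs_iff (hc : p.Coprime q) (hq : 0 < q) {n : ℕ} :
    n ∈ boundedReprs p q ↔
      Representable p q n ∧ ¬(p * q ≤ n ∧ Representable p q (n - p * q)) := by
  rw [mem_boundedReprs]
  constructor
  · rintro ⟨a, b, ha, hb, rfl⟩
    refine ⟨⟨a, b, rfl⟩, ?_⟩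
    rintro ⟨hle, α, β, h⟩
    obtain ⟨a', b', ha', hb', h'⟩ := exists_repr_fst_lt hq
      (show α * p + (β + p) * q = a * p + b * q by rw [add_mul, ← add_assoc, h]; omega)
    have := (eq_of_repr_eq hc ha' ha h').2
    omega
  · rintro ⟨⟨α, β, h⟩, hnot⟩
    obtain ⟨a, b, ha, -, rfl⟩ := exists_repr_fst_lt hq h
    refine ⟨a, b, ha, ?_, rfl⟩
    by_contra! hb
    have := Nat.mul_le_mul_right q hb
    exact hnot ⟨by omega, a, b - p, by rw [Nat.sub_mul]; omega⟩

noncomputable def nonReprs (p q : ℕ) : Finset ℕ :=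
  (range (p * q)).filter fun n => ¬Representable p q n

lemma mem_nonReprs (hc : p.Coprime q) (hp : 1 < p) (hq : 1 < q) {n : ℕ} :
    n ∈ nonReprs p q ↔ ¬Representable p q n := by
  simp only [nonReprs, mem_filter, mem_range, and_iff_right_iff_imp]
  intro h
  by_contra! hn
  exact h (representable_of_mul_le hc hp hq hn)

lemma boundedReprs_union_nonReprs (hc : p.Coprime q) (hp : 1 < p) (hq : 1 < q) :
    boundedReprs p q ∪ nonReprs p q = (nonReprs p q).image (· + p * q) ∪ range (p * q) := by
  ext n
  simp only [mem_union, mem_boundedReprs_iff hc (by omega : 0 < q), mem_nonReprs hc hp hq,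
    mem_image, mem_range]
  by_cases hn : n < p * q
  · have : ¬p * q ≤ n := by omega
    tauto
  · have hrep := representable_of_mul_le hc hp hq (not_lt.mp hn)
    constructor
    · rintro (⟨-, h⟩ | h)
      · exact Or.inl ⟨n - p * q, fun h' => h ⟨by omega, h'⟩, by omega⟩
      · exact absurd hrep h
    · rintro (⟨m, hm, rfl⟩ | h)
      · exact Or.inl ⟨hrep, fun h => hm (by simpa using h.2)⟩
      · exact absurd h hn

lemma disjoint_boundedReprs_nonReprs : Disjoint (boundedReprs p q) (nonReprs p q) := by
  refine disjoint_left.mpr fun n hE hN => (mem_filter.mp hN).2 ?_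
  obtain ⟨a, b, -, -, h⟩ := mem_boundedReprs.mp hE
  exact ⟨a, b, h⟩

variable {R : Type*}

lemma sum_boundedReprs_pow [CommSemiring R] (hc : p.Coprime q) (x : R) :
    ∑ n ∈ boundedReprs p q, x ^ n =
      (∑ a ∈ range q, (x ^ p) ^ a) * ∑ b ∈ range p, (x ^ q) ^ b := by
  have hinj : Set.InjOn (fun ab : ℕ × ℕ => ab.1 * p + ab.2 * q)
      (range q ×ˢ range p : Finset (ℕ × ℕ)) := by
    rintro ⟨a, b⟩ hab ⟨a', b'⟩ hab' h
    simp only [coe_product, Set.mem_prod, mem_coe, mem_range] at hab hab'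
    obtain ⟨rfl, rfl⟩ := eq_of_repr_eq hc hab.1 hab'.1 h
    rfl
  rw [boundedReprs, sum_image hinj, sum_product, sum_mul_sum]
  refine sum_congr rfl fun a _ => sum_congr rfl fun b _ => ?_
  rw [← pow_mul, ← pow_mul, ← pow_add, mul_comm p a, mul_comm q b]

lemma sum_boundedReprs_add_sum_nonReprs [CommSemiring R] (hc : p.Coprime q) (hp : 1 < p)
    (hq : 1 < q) (x : R) :
    ∑ n ∈ boundedReprs p q, x ^ n + ∑ n ∈ nonReprs p q, x ^ n =
      x ^ (p * q) * ∑ n ∈ nonReprs p q, x ^ n + ∑ n ∈ range (p * q), x ^ n := by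
  have hdisj : Disjoint ((nonReprs p q).image (· + p * q)) (range (p * q)) :=
    disjoint_left.mpr fun n hn hr => by
      obtain ⟨m, -, rfl⟩ := mem_image.mp hn
      simp at hr
  rw [← sum_union disjoint_boundedReprs_nonReprs, boundedReprs_union_nonReprs hc hp hq,
    sum_union hdisj, sum_image fun _ _ _ _ => Nat.add_right_cancel, mul_sum]
  simp only [pow_add, mul_comm]

lemma cyclotomic_prime_mul_prime_mul_X_pow_sub_one [CommRing R] (hp : p.Prime) (hq : q.Prime)
    (hpq : p ≠ q) :
    cyclotomic (p * q) R * ((X ^ p - 1) * (X ^ q - 1)) = (X ^ (p * q) - 1) * (X - 1) := by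
  have : Fact q.Prime := ⟨hq⟩
  have hexp := cyclotomic_expand_eq_cyclotomic_mul hp
    ((Nat.prime_dvd_prime_iff_eq hp hq).not.mpr hpq) R
  have hq1 := congrArg (expand R p) (cyclotomic_prime_mul_X_sub_one R q)
  simp only [map_mul, map_sub, map_pow, map_one, expand_X, hexp] at hq1
  rw [mul_comm q p] at hq1
  linear_combination (X - 1 : R[X]) * hq1 - (X ^ p - 1) * cyclotomic (p * q) R *
    cyclotomic_prime_mul_X_sub_one R q

lemma cyclotomic_prime_mul_prime_eq [CommRing R] [IsDomain R] (hp : p.Prime)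
    (hq : q.Prime) (hpq : p ≠ q) :
    cyclotomic (p * q) R = 1 + (X - 1) * ∑ n ∈ nonReprs p q, (X : R[X]) ^ n := by
  have hc : p.Coprime q := (Nat.coprime_primes hp hq).mpr hpq
  have hsplit := sum_boundedReprs_add_sum_nonReprs hc hp.one_lt hq.one_lt (X : R[X])
  have hprod := sum_boundedReprs_pow hc (X : R[X])
  have hgeom := geom_sum_mul (X : R[X]) (p * q)
  have hgeom_p := geom_sum_mul ((X : R[X]) ^ p) q
  have hgeom_q := geom_sum_mul ((X : R[X]) ^ q) p
  have hcyc := cyclotomic_prime_mul_prime_mul_X_pow_sub_one (R := R) hp hq hpq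
  have hne (n : ℕ) (hn : 0 < n) : (X : R[X]) ^ n - 1 ≠ 0 := by
    simpa using X_pow_sub_C_ne_zero hn (1 : R)
  -- With `f` the sum over `nonReprs` and `E` the one over `boundedReprs`, `hsplit` and `hgeom`
  -- give `(1 + (X - 1) * f) * (X ^ (p * q) - 1) = (X - 1) * E`, and by `hprod` and the other
  -- geometric sums `E * (X ^ p - 1) * (X ^ q - 1) = (X ^ (p * q) - 1) ^ 2`.
  refine mul_right_cancel₀ (mul_ne_zero (mul_ne_zero (hne p hp.pos) (hne q hq.pos))
    (hne (p * q) (Nat.mul_pos hp.pos hq.pos))) ?_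
  rw [← pow_mul] at hgeom_p
  rw [← pow_mul, mul_comm q p] at hgeom_q
  linear_combination (X ^ (p * q) - 1) * hcyc
    - (X - 1) * (∑ b ∈ range p, ((X : R[X]) ^ q) ^ b) * (X ^ q - 1) * hgeom_p
    - (X - 1) * (X ^ (p * q) - 1) * hgeom_q
    + (X ^ p - 1) * (X ^ q - 1) * ((X - 1) * hsplit + hgeom - (X - 1) * hprod)

end CyclotomicPQ

open CyclotomicPQ

theorem coeff_cyclotomic_pq_sub_one_div (p q : ℕ) (hp : p.Prime) (hq : q.Prime)
    (hpq : p < q) (i : ℕ) :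
    ((cyclotomic (p * q) ℤ - 1) /ₘ (X - C 1)).coeff i =
      if ∃ α β : ℕ, α * p + β * q = i then 0 else 1 := by
  rw [cyclotomic_prime_mul_prime_eq hp hq hpq.ne, add_sub_cancel_left, ← C_1,
    mul_divByMonic_cancel_left _ (monic_X_sub_C 1)]
  simp only [finsetSum_coeff, coeff_X_pow, Finset.sum_ite_eq,
    mem_nonReprs ((Nat.coprime_primes hp hq).mpr hpq.ne) hp.one_lt hq.one_lt]
  exact ite_not _ _ _
end

section
/- Let p < q be primes. If p divides i, then the i-th coefficient of the polynomial (Φ_{pq}(x) - 1)/(x - 1) is 0. -/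
/-!
Since `Φ_q(X)(X - 1) = X^q - 1` and `Φ_q(X^p) = Φ_{pq}(X) Φ_q(X)`, the quotient
`f = (Φ_{pq} - 1)/(X - 1)` satisfies `f · (X^q - 1) = Φ_q(X^p) - Φ_q(X)`. Comparing
coefficients gives `f_m = f_{m+q} + [X^{m+q}](Φ_q(X^p) - Φ_q(X))`. For `p ∣ i` and `t ≥ 1`
the right-hand polynomial has no term `X^{i+tq}`: `Φ_q` has degree `< q`, and if
`p ∣ i + tq` then `p ∣ t`, so `(i + tq)/p ≥ q`. Hence `f_i = f_{i+tq}` for every `t`,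
which vanishes for large `t`.
-/

open Polynomial

theorem Nat.prime_pow_ne_mul_of_ne {p q r : ℕ} (hp : p.Prime) (hq : q.Prime) (hr : r.Prime)
    (hpq : p ≠ q) (k : ℕ) : r ^ k ≠ p * q := by
  intro h
  have hpr : p = r :=
    (Nat.prime_dvd_prime_iff_eq hp hr).mp (hp.dvd_of_dvd_pow (h ▸ dvd_mul_right p q))
  have hqr : q = r :=
    (Nat.prime_dvd_prime_iff_eq hq hr).mp (hq.dvd_of_dvd_pow (h ▸ dvd_mul_left q p))
  exact hpq (hpr.trans hqr.symm)

namespace Polynomial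

theorem coeff_eq_zero_of_mul_X_pow_sub_one {R : Type*} [Ring R] {f : R[X]} {n i : ℕ}
    (hn : 0 < n) (hf : ∀ t : ℕ, (f * (X ^ n - 1)).coeff (i + (t + 1) * n) = 0) :
    f.coeff i = 0 := by
  have periodic : ∀ t : ℕ, f.coeff i = f.coeff (i + t * n) := by
    intro t
    induction t with
    | zero => simp
    | succ t ih =>
      have h := hf t
      rw [mul_sub, mul_one, coeff_sub, add_mul, one_mul, ← add_assoc, coeff_mul_X_pow,
        sub_eq_zero] at h
      rw [ih, h, add_mul, one_mul, add_assoc]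
  rw [periodic (f.natDegree + 1)]
  exact coeff_eq_zero_of_natDegree_lt (by nlinarith)

theorem coeff_expand_add_mul_eq_zero {R : Type*} [CommSemiring R] {P : R[X]} {p q k t : ℕ}
    (hp : 0 < p) (hpq : p.Coprime q) (hP : P.natDegree < q) (hk : p ∣ k) (ht : 0 < t) :
    (expand R p P).coeff (k + t * q) = 0 := by
  rw [coeff_expand hp]
  split_ifs with hdvd
  · have hpt : p ∣ t := hpq.dvd_of_dvd_mul_right ((Nat.dvd_add_right hk).mp hdvd)
    have hq_le : q ≤ (k + t * q) / p := by
      rw [Nat.le_div_iff_mul_le hp, mul_comm]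
      nlinarith [Nat.le_of_dvd ht hpt]
    exact coeff_eq_zero_of_natDegree_lt (hP.trans_le hq_le)
  · rfl

variable {R : Type*} {p q : ℕ}

theorem eval_one_cyclotomic_mul_of_ne [Ring R] (hp : p.Prime) (hq : q.Prime) (hpq : p ≠ q) :
    eval 1 (cyclotomic (p * q) R) = 1 :=
  eval_one_cyclotomic_not_prime_pow fun hr k => Nat.prime_pow_ne_mul_of_ne hp hq hr hpq k

theorem cyclotomic_mul_sub_one_divByMonic_mul [CommRing R] (hp : p.Prime) (hq : q.Prime)
    (hpq : p ≠ q) :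
    (cyclotomic (p * q) R - 1) /ₘ (X - C 1) * (X ^ q - 1) =
      expand R p (cyclotomic q R) - cyclotomic q R := by
  have hroot : IsRoot (cyclotomic (p * q) R - 1) 1 := by
    rw [IsRoot.def, eval_sub, eval_one, eval_one_cyclotomic_mul_of_ne hp hq hpq, sub_self]
  have hdiv := mul_divByMonic_eq_iff_isRoot.mpr hroot
  have hexpand := cyclotomic_expand_eq_cyclotomic_mul hp
    (fun h => hpq ((Nat.prime_dvd_prime_iff_eq hp hq).mp h)) R
  have := Fact.mk hq
  rw [← cyclotomic_prime_mul_X_sub_one R q, hexpand, mul_comm q p]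
  rw [C_1] at hdiv ⊢
  linear_combination cyclotomic q R * hdiv

end Polynomial

theorem coeff_zero_of_dvd (p q : ℕ) (hp : p.Prime) (hq : q.Prime)
    (hpq : p < q) (i : ℕ) (hdvd : p ∣ i) :
    ((cyclotomic (p * q) ℤ - 1) /ₘ (X - C 1)).coeff i = 0 := by
  have hcop : p.Coprime q := (Nat.coprime_primes hp hq).mpr hpq.ne
  have hdeg : (cyclotomic q ℤ).natDegree < q := by
    rw [natDegree_cyclotomic, Nat.totient_prime hq]
    exact Nat.sub_lt hq.pos one_pos
  refine coeff_eq_zero_of_mul_X_pow_sub_one hq.pos fun t => ?_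
  rw [cyclotomic_mul_sub_one_divByMonic_mul hp hq hpq.ne, coeff_sub,
    coeff_expand_add_mul_eq_zero hp.pos hcop hdeg hdvd t.succ_pos,
    coeff_eq_zero_of_natDegree_lt (hdeg.trans_le (by nlinarith)), sub_zero]
end

section
/- Let p < q be primes. For 0 ≤ i < q, the i-th coefficient of (Φ_{pq}(x) - 1)/(x - 1) is 0 if and only if p divides i. -/
/-!
Put `h = (Φ_{pq} - 1) / (X - 1)`. Since `(X - 1) Φ_q = X^q - 1` and `Φ_{pq} Φ_q = Φ_q(X^p)`,
we get `(X^q - 1) h = Φ_q(X^p) - Φ_q`. Below degree `q` the left side has coefficients `-h_i`,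
and `Φ_q(X^p) - Φ_q` has coefficient `0` at multiples of `p` and `-1` elsewhere.
-/

open Polynomial

section

variable {R : Type*} [CommRing R] {p q : ℕ}

theorem coeff_X_pow_sub_one_mul_of_lt {n i : ℕ} (f : R[X]) (hi : i < n) :
    ((X ^ n - 1) * f).coeff i = -f.coeff i := by
  rw [sub_mul, one_mul, coeff_sub, coeff_X_pow_mul', if_neg hi.not_ge, zero_sub]

theorem coeff_cyclotomic_prime_of_lt [Fact q.Prime] {i : ℕ} (hi : i < q) :
    (cyclotomic q R).coeff i = 1 := by
  simp [cyclotomic_prime, coeff_X_pow, hi]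

theorem coeff_expand_cyclotomic_prime_of_lt [Fact q.Prime] (hp : 0 < p) {i : ℕ}
    (hi : i < p * q) :
    (expand R p (cyclotomic q R)).coeff i = if p ∣ i then 1 else 0 := by
  rw [coeff_expand hp, coeff_cyclotomic_prime_of_lt (Nat.div_lt_of_lt_mul hi)]

theorem eval_one_cyclotomic_prime_mul_prime (hp : p.Prime) (hq : q.Prime) (hpq : p ≠ q) :
    eval 1 (cyclotomic (p * q) R) = 1 := by
  refine eval_one_cyclotomic_not_prime_pow fun {r} hr k hk => hpq ?_
  have hpr : p = r := (Nat.prime_dvd_prime_iff_eq hp hr).mp <|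
    hp.dvd_of_dvd_pow (hk ▸ dvd_mul_right p q)
  have hqr : q = r := (Nat.prime_dvd_prime_iff_eq hq hr).mp <|
    hq.dvd_of_dvd_pow (hk ▸ dvd_mul_left q p)
  rw [hpr, hqr]

theorem X_pow_sub_one_mul_cyclotomic_sub_one_divByMonic (hp : p.Prime) (hq : q.Prime)
    (hpq : p ≠ q) :
    (X ^ q - 1) * ((cyclotomic (p * q) R - 1) /ₘ (X - C 1)) =
      expand R p (cyclotomic q R) - cyclotomic q R := by
  have := Fact.mk hq
  have hdvd : (X - C 1) * ((cyclotomic (p * q) R - 1) /ₘ (X - C 1)) =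
      cyclotomic (p * q) R - 1 := by
    rw [mul_divByMonic_eq_iff_isRoot, IsRoot, eval_sub, eval_one,
      eval_one_cyclotomic_prime_mul_prime hp hq hpq, sub_self]
  have hpq' : ¬p ∣ q := (Nat.prime_dvd_prime_iff_eq hp hq).not.mpr hpq
  calc (X ^ q - 1) * ((cyclotomic (p * q) R - 1) /ₘ (X - C 1))
      = cyclotomic q R * ((X - C 1) * ((cyclotomic (p * q) R - 1) /ₘ (X - C 1))) := by
        rw [← cyclotomic_prime_mul_X_sub_one, C_1, mul_assoc]
    _ = cyclotomic q R * (cyclotomic (p * q) R - 1) := by rw [hdvd]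
    _ = expand R p (cyclotomic q R) - cyclotomic q R := by
        rw [mul_sub, mul_one, cyclotomic_expand_eq_cyclotomic_mul hp hpq', mul_comm q p, mul_comm]

theorem coeff_cyclotomic_sub_one_divByMonic_of_lt (hp : p.Prime) (hq : q.Prime) (hpq : p ≠ q)
    {i : ℕ} (hi : i < q) :
    ((cyclotomic (p * q) R - 1) /ₘ (X - C 1)).coeff i = if p ∣ i then 0 else 1 := by
  have := Fact.mk hq
  have hcoeff := congrArg (coeff · i)
    (X_pow_sub_one_mul_cyclotomic_sub_one_divByMonic (R := R) hp hq hpq)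
  simp only [coeff_X_pow_sub_one_mul_of_lt _ hi, coeff_sub,
    coeff_expand_cyclotomic_prime_of_lt hp.pos (hi.trans_le (Nat.le_mul_of_pos_left q hp.pos)),
    coeff_cyclotomic_prime_of_lt hi] at hcoeff
  rw [neg_eq_iff_eq_neg.mp hcoeff]
  split_ifs <;> simp

end

theorem coeff_zero_iff_dvd (p q : ℕ) (hp : p.Prime) (hq : q.Prime)
    (hpq : p < q) (i : ℕ) (hi : i < q) :
    ((cyclotomic (p * q) ℤ - 1) /ₘ (X - C 1)).coeff i = 0 ↔ p ∣ i := by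
  rw [coeff_cyclotomic_sub_one_divByMonic_of_lt hp hq hpq.ne hi]
  split_ifs with h <;> simp [h]
end

section
/- Let p be a prime and M = p^s with s ≥ 1. For any integers 0 ≤ j < i < M, there exists a polynomial u(x) ∈ ℤ[x] with deg u < φ(M) such that (x^i - x^j) · u(x) ≡ p (mod Φ_M(x)) and every coefficient of u has absolute value at most p - 1. -/
/-!
Put `k = i - j`, let `ζ` be a primitive `p ^ s`-th root of unity and `z = ζ ^ k`. Since `z ≠ 1`
has `p`-power order, its order is `p * P` for some `P`, and `z ^ P` is a primitive `p`-th root of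
unity. With `c r = #{1 ≤ d < p | r < d * P} ∈ [0, p - 1]`, telescoping gives
`(z - 1) * ∑_{r < p P} c r * z ^ r = ∑_{1 ≤ d < p} (z ^ (d P) - 1) = -1 - (p - 1) = -p`.
Hence `w = -∑_r c r X ^ ((r k - j) mod p ^ s)` satisfies `(X ^ i - X ^ j) w ≡ p` modulo `Φ_{p^s}`,
and its exponents are distinct because the `z ^ r` are, so its coefficients lie in `[-(p - 1), 0]`.
Reducing `w` modulo `Φ_{p^s} = ∑_{a < p} X ^ (a p^(s-1))` subtracts its top block of `p^(s-1)`
coefficients from each lower block, so the reduced coefficients are bounded by `p - 1`.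
-/

open Polynomial Finset

theorem coeff_geom_sum_X_pow_mul {R : Type*} [Semiring R] {q : ℕ} {g : R[X]}
    (hg : ∀ n, q ≤ n → g.coeff n = 0) (p n : ℕ) :
    ((∑ a ∈ range p, (X ^ q) ^ a) * g).coeff n = if n < p * q then g.coeff (n % q) else 0 := by
  induction p with
  | zero => simp
  | succ p ih =>
    rw [sum_range_succ, add_mul, coeff_add, ih, ← pow_mul, coeff_X_pow_mul', mul_comm q p,
      add_one_mul]
    by_cases hn : n < p * q
    · rw [if_pos hn, if_neg (by omega), if_pos (by omega), add_zero]
    · rw [if_neg hn, if_pos (by omega), zero_add]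
      split_ifs with hn'
      · rw [← Nat.sub_mul_mod (k := p) (by rw [mul_comm]; omega), mul_comm q p,
          Nat.mod_eq_of_lt (by omega)]
      · exact hg _ (by omega)

theorem exists_reduce_mod_geom_sum_X_pow {R : Type*} [CommRing R] (p q : ℕ) {w : R[X]}
    (hw : ∀ n, p * q ≤ n → w.coeff n = 0) :
    ∃ u : R[X], (∑ a ∈ range p, (X ^ q) ^ a) ∣ w - u ∧ ∀ n, u.coeff n =
      if n < (p - 1) * q then w.coeff n - w.coeff ((p - 1) * q + n % q) else 0 := by
  set g : R[X] := ∑ b ∈ range q, monomial b (w.coeff ((p - 1) * q + b))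
  have hg : ∀ n, g.coeff n = if n < q then w.coeff ((p - 1) * q + n) else 0 := by
    simp [g, finsetSum_coeff, coeff_monomial]
  refine ⟨w - (∑ a ∈ range p, (X ^ q) ^ a) * g, by simp, fun n => ?_⟩
  have hpq : (p - 1) * q = p * q - q := Nat.sub_one_mul p q
  rw [coeff_sub, coeff_geom_sum_X_pow_mul (fun n hn => by rw [hg, if_neg (by omega)])]
  by_cases hlow : n < (p - 1) * q
  · have hq : 0 < q := Nat.pos_of_ne_zero (by rintro rfl; simp at hlow)
    rw [if_pos hlow, if_pos (by omega), hg, if_pos (Nat.mod_lt _ hq)]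
  by_cases htop : n < p * q
  · rw [if_neg hlow, if_pos htop, hg, if_pos (Nat.mod_lt _ (by omega)),
      ← Nat.sub_mul_mod (k := p - 1) (by rw [mul_comm]; omega), mul_comm q,
      Nat.mod_eq_of_lt (by omega), Nat.add_sub_cancel' (by omega), sub_self]
  · rw [if_neg hlow, if_neg htop, hw n (by omega), sub_zero]

theorem coeff_sum_monomial_mem {R ι : Type*} [Semiring R] {s : Finset ι} {e : ι → ℕ}
    (he : Set.InjOn e s) {a : ι → R} {T : Set R} {n : ℕ} (h0 : 0 ∈ T)
    (ha : ∀ r ∈ s, e r = n → a r ∈ T) : (∑ r ∈ s, monomial (e r) (a r)).coeff n ∈ T := by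
  simp only [finsetSum_coeff, coeff_monomial]
  by_cases hn : ∃ r ∈ s, e r = n
  · obtain ⟨r, hr, rfl⟩ := hn
    rw [sum_eq_single_of_mem r hr fun r' hr' hne => if_neg fun h => hne (he hr' hr h), if_pos rfl]
    exact ha r hr rfl
  · push Not at hn
    rwa [sum_eq_zero fun r hr => if_neg (hn r hr)]

theorem sum_range_card_filter_lt_nsmul {ι M : Type*} [AddCommMonoid M] (D : Finset ι)
    (L : ι → ℕ) {N : ℕ} (hL : ∀ d ∈ D, L d ≤ N) (f : ℕ → M) :
    ∑ r ∈ range N, #{d ∈ D | r < L d} • f r = ∑ d ∈ D, ∑ r ∈ range (L d), f r := by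
  simp only [card_filter, sum_smul, ite_smul, one_smul, zero_smul]
  rw [sum_comm]
  refine sum_congr rfl fun d hd => ?_
  rw [← sum_filter]
  congr 1
  ext r
  simp only [mem_filter, mem_range]
  have := hL d hd
  omega

theorem pow_mul_pow_mod_sub_add {G : Type*} [Monoid G] {ζ : G} {M : ℕ} (hζ : ζ ^ M = 1)
    {j : ℕ} (hj : j ≤ M) (n : ℕ) : ζ ^ j * ζ ^ ((M - j + n) % M) = ζ ^ n := by
  rw [← pow_eq_pow_mod _ hζ, ← pow_add, show j + (M - j + n) = M + n by omega, pow_add, hζ,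
    one_mul]

theorem Nat.Prime.dvd_orderOf {G : Type*} [Monoid G] {p s : ℕ} (hp : p.Prime) {z : G}
    (hz : z ^ p ^ s = 1) (hz1 : z ≠ 1) : p ∣ orderOf z := by
  obtain ⟨a, -, ha⟩ := (Nat.dvd_prime_pow hp).mp (orderOf_dvd_of_pow_eq_one hz)
  rcases a with _ | a
  · exact absurd (orderOf_eq_one_iff.mp (by simpa using ha)) hz1
  · exact ha ▸ dvd_pow_self p a.succ_ne_zero

theorem IsPrimitiveRoot.sub_one_mul_sum_staircase {R : Type*} [CommRing R] [IsDomain R] {z : R}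
    {p P : ℕ} (hW : IsPrimitiveRoot (z ^ P) p) (hp : 1 < p) :
    (z - 1) * ∑ r ∈ range (p * P), #{d ∈ Ico 1 p | r < d * P} • z ^ r = -p := by
  have hL : ∀ d ∈ Ico 1 p, d * P ≤ p * P := fun d hd =>
    Nat.mul_le_mul_right P (mem_Ico.mp hd).2.le
  have hW1 : ∑ d ∈ Ico 1 p, (z ^ P) ^ d = -1 := by
    have := hW.geom_sum_eq_zero hp
    rw [sum_range_eq_add_Ico _ (by omega), pow_zero] at this
    exact eq_neg_of_add_eq_zero_right this
  rw [sum_range_card_filter_lt_nsmul _ _ hL, mul_sum]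
  simp only [mul_geom_sum, sum_sub_distrib, mul_comm _ P, pow_mul, hW1, sum_const, Nat.card_Ico,
    nsmul_one, Nat.cast_sub hp.le]
  ring

theorem exists_preinverse_cyclotomic_prime_pow {p s i j : ℕ} (hp : p.Prime) (hji : j < i)
    (hiM : i < p ^ s) :
    ∃ w : ℤ[X], cyclotomic (p ^ s) ℤ ∣ (X ^ i - X ^ j) * w - C (p : ℤ) ∧
      (∀ n, -((p : ℤ) - 1) ≤ w.coeff n ∧ w.coeff n ≤ 0) ∧ ∀ n, p ^ s ≤ n → w.coeff n = 0 := by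
  set M := p ^ s
  have hM : 0 < M := by omega
  have hζ := Complex.isPrimitiveRoot_exp M hM.ne'
  set ζ := Complex.exp (2 * Real.pi * Complex.I / M)
  set k := i - j
  set z := ζ ^ k
  have hzM : z ^ M = 1 := by rw [← pow_mul, mul_comm, pow_mul, hζ.pow_eq_one, one_pow]
  obtain ⟨P, hNP⟩ := hp.dvd_orderOf hzM (hζ.pow_ne_one_of_pos_of_lt (by omega) (by omega))
  have horder : 0 < orderOf z := orderOf_pos_iff.mpr (isOfFinOrder_iff_pow_eq_one.mpr ⟨M, hM, hzM⟩)
  have hz : IsPrimitiveRoot z (p * P) := hNP ▸ IsPrimitiveRoot.orderOf z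
  set e : ℕ → ℕ := fun r => (M - j + r * k) % M
  have hζe : ∀ r, ζ ^ j * ζ ^ e r = z ^ r := fun r => by
    rw [pow_mul_pow_mod_sub_add hζ.pow_eq_one (by omega), mul_comm, pow_mul]
  have he : Set.InjOn e (range (p * P)) := fun r hr r' hr' h =>
    hz.pow_inj (mem_range.mp hr) (mem_range.mp hr') (by rw [← hζe, ← hζe, h])
  set c : ℕ → ℕ := fun r => #{d ∈ Ico 1 p | r < d * P}
  refine ⟨∑ r ∈ range (p * P), monomial (e r) (-(c r : ℤ)), ?_, fun n => ?_, fun n hn => ?_⟩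
  · rw [cyclotomic_eq_minpoly hζ hM]
    refine minpoly.isIntegrallyClosed_dvd (hζ.isIntegral hM) ?_
    have hW : IsPrimitiveRoot (z ^ P) p := hz.pow (hNP ▸ horder) (mul_comm p P)
    have hij : ζ ^ i - ζ ^ j = ζ ^ j * (z - 1) := by
      rw [show i = j + k by omega, pow_add]; ring
    simp only [map_sub, map_mul, map_pow, aeval_X, aeval_C, map_sum, aeval_monomial, hij]
    rw [sub_eq_zero]
    calc ζ ^ j * (z - 1) * ∑ r ∈ range (p * P), (algebraMap ℤ ℂ) (-(c r : ℤ)) * ζ ^ e r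
        = -((z - 1) * ∑ r ∈ range (p * P), c r • z ^ r) := by
          rw [mul_sum, mul_sum, ← sum_neg_distrib]
          refine sum_congr rfl fun r _ => ?_
          rw [← hζe, nsmul_eq_mul]
          simp only [map_neg, map_natCast]
          ring
      _ = (algebraMap ℤ ℂ) p := by
          rw [hW.sub_one_mul_sum_staircase hp.one_lt, neg_neg, map_natCast]
  · refine coeff_sum_monomial_mem (T := {x | -((p : ℤ) - 1) ≤ x ∧ x ≤ 0}) he
      (by simp [hp.one_le]) fun r _ _ => ?_
    have hc : c r ≤ p - 1 := (card_filter_le _ _).trans (Nat.card_Ico 1 p).le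
    simp only [Set.mem_ofPred_eq]
    have hp1 := hp.one_le
    omega
  · exact coeff_sum_monomial_mem (T := {0}) he rfl fun r _ her =>
      absurd her ((Nat.mod_lt _ hM).trans_le hn).ne

theorem scaled_inverse_prime_power_general (p s : ℕ) (hp : p.Prime)
    (i j : ℕ) (hji : j < i) (hiM : i < p ^ s) :
    ∃ u : Polynomial ℤ, u.degree < (Nat.totient (p ^ s) : ℕ) ∧
      cyclotomic (p ^ s) ℤ ∣ ((X ^ i - X ^ j) * u - C (p : ℤ)) ∧
      ∀ n, |u.coeff n| ≤ (p : ℤ) - 1 := by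
  obtain ⟨w, hw, hw_coeff, hw_top⟩ := exists_preinverse_cyclotomic_prime_pow hp hji hiM
  obtain ⟨s, rfl⟩ : ∃ s', s = s' + 1 :=
    Nat.exists_eq_succ_of_ne_zero (by rintro rfl; rw [pow_zero] at hiM; omega)
  obtain ⟨u, hwu, hu⟩ := exists_reduce_mod_geom_sum_X_pow p (p ^ s) (w := w) (by rwa [← pow_succ'])
  refine ⟨u, ?_, ?_, fun n => ?_⟩
  · rw [Nat.totient_prime_pow_succ hp, degree_lt_iff_coeff_zero]
    intro n hn
    rw [hu, if_neg (by rw [mul_comm]; exact Nat.not_lt.mpr (mod_cast hn))]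
  · rw [← cyclotomic_prime_pow_eq_geom_sum hp] at hwu
    rw [show (X ^ i - X ^ j) * u - C (p : ℤ) =
      ((X ^ i - X ^ j) * w - C (p : ℤ)) - (X ^ i - X ^ j) * (w - u) by ring]
    exact dvd_sub hw (hwu.mul_left _)
  · rw [hu]
    split_ifs
    · rw [abs_le]
      constructor <;> linarith [hw_coeff n, hw_coeff ((p - 1) * p ^ s + n % p ^ s)]
    · simp [hp.one_le]

theorem scaled_inverse_prime_power (p s : ℕ) (hp : p.Prime) (hs : 1 ≤ s)
    (i j : ℕ) (hji : j < i) (hiM : i < p ^ s) :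
    ∃ u : Polynomial ℤ, u.degree < (Nat.totient (p ^ s) : ℕ) ∧
      cyclotomic (p ^ s) ℤ ∣ ((X ^ i - X ^ j) * u - C (p : ℤ)) ∧
      ∀ n, |u.coeff n| ≤ (p : ℤ) - 1 :=
  scaled_inverse_prime_power_general p s hp i j hji hiM
end

section
/- Let p < q be primes and 0 ≤ k ≤ p - 1. Then x^{φ(pq)+k} reduced modulo Φ_{pq}(x) equals x^{φ(pq)+k} - Φ_{pq}(x) · (Σ_{i=0}^{k} x^i), and moreover this remainder polynomial has all coefficients in {-1, 0, 1}. -/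
/-!
Since `Φ_{pq} · Φ_p = Φ_p(x^q)`, the series `Φ_{pq}(x) / (1 - x)` equals
`∑_{a<p} x^{aq} / (1 - x^p)`. Representations `n = a q + b p` with `a < p` are unique, so the
partial sums of the coefficients of `Φ_{pq}` form the indicator of the semigroup `⟨p, q⟩`, and the
coefficient of `x^n` in `Φ_{pq} · (1 + ⋯ + x^k)` is `[n ∈ ⟨p, q⟩] - [n - k - 1 ∈ ⟨p, q⟩]`.
The Frobenius number of `⟨p, q⟩` is `pq - p - q = φ(pq) - 1`, and by the symmetry
`m ∈ ⟨p, q⟩ ↔ pq - p - q - m ∉ ⟨p, q⟩` it is the only gap in `[φ(pq) - p, ∞)`. Hence in degrees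
`≥ φ(pq)` these coefficients vanish except for a single `1` at `φ(pq) + k`, which `x^{φ(pq)+k}`
cancels: the difference is the remainder, and each of its coefficients is a difference of two
values in `{0, 1}`.
-/

namespace Nat

variable {p q : ℕ}

theorem Coprime.exists_lt_int_eq_mul_add_mul (cop : p.Coprime q) (hp : 0 < p) (z : ℤ) :
    ∃ a < p, ∃ b : ℤ, z = a * q + b * p := by
  obtain ⟨u, v, h⟩ : ∃ u v : ℤ, ((1 : ℕ) : ℤ) = p * u + q * v := by
    rw [← Int.gcd_dvd_iff, Int.gcd_natCast_natCast, cop.gcd_eq_one]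
  have hp' : (0 : ℤ) < p := by exact_mod_cast hp
  have hlt := Int.emod_lt_of_pos (z * v) hp'
  have hnonneg := Int.emod_nonneg (z * v) hp'.ne'
  refine ⟨((z * v) % p).toNat, by omega, z * u + (z * v / p) * q, ?_⟩
  rw [Int.toNat_of_nonneg hnonneg]
  push_cast at h
  linear_combination z * h - (q : ℤ) * Int.emod_add_mul_ediv (z * v) p

theorem mem_closure_pair_iff_exists_lt (hp : 0 < p) {n : ℕ} :
    n ∈ AddSubmonoid.closure {p, q} ↔ ∃ a < p, ∃ b, a * q + b * p = n := by
  rw [AddSubmonoid.mem_closure_pair]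
  constructor
  · rintro ⟨b, a, rfl⟩
    refine ⟨a % p, Nat.mod_lt _ hp, b + a / p * q, ?_⟩
    rw [smul_eq_mul, smul_eq_mul]
    nth_rw 3 [← Nat.mod_add_div a p]
    ring
  · rintro ⟨a, -, b, rfl⟩
    exact ⟨b, a, by simp [add_comm]⟩

theorem Coprime.eq_of_mul_add_mul_eq (cop : p.Coprime q) {a a' b b' : ℕ} (ha : a < p)
    (ha' : a' < p) (h : a * q + b * p = a' * q + b' * p) : a = a' ∧ b = b' := by
  have hmod : a * q ≡ a' * q [MOD p] := by
    simpa [Nat.ModEq, Nat.add_mul_mod_self_right] using congrArg (· % p) h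
  obtain rfl : a = a' := Nat.ModEq.eq_of_lt_of_lt (hmod.cancel_right_of_coprime cop) ha ha'
  exact ⟨rfl, Nat.eq_of_mul_eq_mul_right (by omega) (Nat.add_left_cancel h)⟩

/-- Write `m = a q + b p` with `0 ≤ a < p`; if `b < 0`, then `j = (p - 1 - a) q + (-1 - b) p`. -/
theorem Coprime.mem_closure_pair_of_add_eq (cop : p.Coprime q) (hp : 0 < p) {m j : ℕ}
    (h : m + j + p + q = p * q) (hj : j ∉ AddSubmonoid.closure {p, q}) :
    m ∈ AddSubmonoid.closure {p, q} := by
  obtain ⟨a, hap, b, hab⟩ := cop.exists_lt_int_eq_mul_add_mul hp m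
  rcases lt_or_ge b 0 with hb | hb
  · refine absurd ?_ hj
    obtain ⟨c, hc⟩ := Int.eq_ofNat_of_zero_le (by omega : 0 ≤ -1 - b)
    obtain ⟨d, rfl⟩ : ∃ d, p = a + 1 + d := ⟨p - (a + 1), by omega⟩
    refine (mem_closure_pair_iff_exists_lt hp).2 ⟨d, by omega, c, ?_⟩
    have h' : (m + j + (a + 1 + d) + q : ℤ) = (a + 1 + d) * q := by exact_mod_cast h
    push_cast at hab
    exact_mod_cast (by linear_combination -h' + hab - (a + 1 + d : ℤ) * hc :
      (d * q + c * (a + 1 + d) : ℤ) = j)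
  · lift b to ℕ using hb
    exact (mem_closure_pair_iff_exists_lt hp).2 ⟨a, hap, b, by exact_mod_cast hab.symm⟩

theorem Coprime.mem_closure_pair_iff_add_ne (cop : p.Coprime q) (hp : 1 < p) (hpq : p < q)
    {m : ℕ} (hm : p * q < m + 2 * p + q) :
    m ∈ AddSubmonoid.closure {p, q} ↔ m + p + q ≠ p * q := by
  have hfrob := frobeniusNumber_iff.1 (frobeniusNumber_pair cop hp (hp.trans hpq))
  have hle : p + q ≤ p * q := Nat.add_le_mul hp (hp.trans hpq)
  rcases lt_trichotomy (m + p + q) (p * q) with hlt | heq | hgt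
  · obtain ⟨j, hj⟩ : ∃ j, m + (j + 1) + p + q = p * q := ⟨p * q - (m + p + q) - 1, by omega⟩
    refine iff_of_true (cop.mem_closure_pair_of_add_eq (by omega) hj ?_) hlt.ne
    rw [AddSubmonoid.mem_closure_pair]
    rintro ⟨a, b, hab⟩
    rcases Nat.eq_zero_or_pos a with rfl | ha <;> rcases Nat.eq_zero_or_pos b with rfl | hb <;>
      simp only [smul_eq_mul] at hab <;> nlinarith
  · exact iff_of_false (by rw [show m = p * q - p - q by omega]; exact hfrob.1) (not_not.2 heq)
  · exact iff_of_true (hfrob.2 _ (by omega)) hgt.ne'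

end Nat

open Polynomial Finset

theorem geom_sum_range_mul {α : Type*} [Semiring α] (x : α) (m n : ℕ) :
    ∑ i ∈ range (m * n), x ^ i = (∑ i ∈ range m, x ^ i) * ∑ j ∈ range n, (x ^ m) ^ j := by
  induction n with
  | zero => simp
  | succ n ih =>
    rw [Nat.mul_succ, sum_range_add, ih, sum_range_succ, mul_add, ← pow_mul, sum_mul _ _ (x ^ _)]
    simp only [← pow_add, add_comm (m * n)]

namespace Polynomial

theorem coeff_mul_geom_sum {R : Type*} [Ring R] (f : R[X]) (m n : ℕ) :
    (f * ∑ i ∈ range m, X ^ i).coeff n =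
      ∑ i ∈ range (n + 1), f.coeff i - ∑ i ∈ range (n + 1 - m), f.coeff i := by
  induction m with
  | zero => simp
  | succ m ih =>
    rw [sum_range_succ, mul_add, coeff_add, ih, coeff_mul_X_pow']
    split_ifs with hmn
    · rw [show n + 1 - m = n - m + 1 by omega, sum_range_succ _ (n - m),
        show n + 1 - (m + 1) = n - m by omega]
      abel
    · rw [show n + 1 - m = 0 by omega, show n + 1 - (m + 1) = 0 by omega, add_zero]

variable {p q : ℕ} (R : Type*) [CommRing R]

theorem cyclotomic_mul_mul_geom_sum (hp : p.Prime) (hq : q.Prime) (hpq : p ≠ q) :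
    cyclotomic (p * q) R * ∑ i ∈ range p, X ^ i = ∑ i ∈ range p, X ^ (i * q) := by
  have : Fact p.Prime := ⟨hp⟩
  have hqp : ¬q ∣ p := fun h => hpq ((Nat.prime_dvd_prime_iff_eq hq hp).1 h).symm
  rw [← cyclotomic_prime R p, ← cyclotomic_expand_eq_cyclotomic_mul hq hqp, cyclotomic_prime,
    map_sum]
  simp [pow_mul']

open scoped Classical in
theorem sum_range_succ_coeff_cyclotomic_mul (hp : p.Prime) (hq : q.Prime) (hpq : p ≠ q)
    (n : ℕ) :
    ∑ i ∈ range (n + 1), (cyclotomic (p * q) R).coeff i =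
      if n ∈ AddSubmonoid.closure {p, q} then 1 else 0 := by
  have cop : p.Coprime q := (Nat.coprime_primes hp hq).2 hpq
  set s := range p ×ˢ range (n + 1)
  set g : ℕ × ℕ → ℕ := fun x => x.1 * q + x.2 * p
  have hg : Set.InjOn g s := by
    rintro ⟨a, b⟩ hab ⟨a', b'⟩ hab' h
    simp only [s, coe_product, Set.mem_prod, coe_range, Set.mem_Iio] at hab hab'
    obtain ⟨rfl, rfl⟩ := cop.eq_of_mul_add_mul_eq hab.1 hab'.1 h
    rfl
  have himage : n ∈ s.image g ↔ n ∈ AddSubmonoid.closure {p, q} := by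
    rw [Nat.mem_closure_pair_iff_exists_lt hp.pos, mem_image]
    constructor
    · rintro ⟨⟨a, b⟩, hab, rfl⟩
      exact ⟨a, mem_range.1 (mem_product.1 hab).1, b, rfl⟩
    · rintro ⟨a, ha, b, rfl⟩
      refine ⟨(a, b), mem_product.2 ⟨mem_range.2 ha, mem_range.2 ?_⟩, rfl⟩
      nlinarith [hp.pos]
  have hprod :
      cyclotomic (p * q) R * ∑ i ∈ range (p * (n + 1)), X ^ i = ∑ m ∈ s.image g, X ^ m := by
    rw [geom_sum_range_mul, ← mul_assoc, cyclotomic_mul_mul_geom_sum R hp hq hpq, sum_mul_sum,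
      sum_image hg, sum_product]
    simp only [g, ← pow_mul, ← pow_add, mul_comm p]
  have := coeff_mul_geom_sum (cyclotomic (p * q) R) (p * (n + 1)) n
  rw [hprod, Nat.sub_eq_zero_of_le (by nlinarith [hp.pos]), range_zero, sum_empty, sub_zero,
    finsetSum_coeff] at this
  simp only [coeff_X_pow, sum_ite_eq, himage] at this
  exact this.symm

open scoped Classical in
theorem coeff_cyclotomic_mul_geom_sum (hp : p.Prime) (hq : q.Prime) (hpq : p ≠ q) (m n : ℕ) :
    (cyclotomic (p * q) R * ∑ i ∈ range m, X ^ i).coeff n =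
      (if n ∈ AddSubmonoid.closure {p, q} then 1 else 0) -
        if m ≤ n ∧ n - m ∈ AddSubmonoid.closure {p, q} then 1 else 0 := by
  rw [coeff_mul_geom_sum, sum_range_succ_coeff_cyclotomic_mul R hp hq hpq]
  by_cases hmn : m ≤ n
  · rw [show n + 1 - m = n - m + 1 by omega, sum_range_succ_coeff_cyclotomic_mul R hp hq hpq]
    simp only [hmn, true_and]
  · simp [hmn, show n + 1 - m = 0 by omega]

end Polynomial

theorem modByMonic_pow_totient_add (p q k : ℕ) (hp : p.Prime) (hq : q.Prime)
    (hpq : p < q) (hk : k ≤ p - 1) :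
    X ^ (Nat.totient (p * q) + k) %ₘ cyclotomic (p * q) ℤ =
      X ^ (Nat.totient (p * q) + k) -
        cyclotomic (p * q) ℤ * ∑ i ∈ Finset.range (k + 1), X ^ i ∧
    ∀ n, |(X ^ (Nat.totient (p * q) + k) %ₘ cyclotomic (p * q) ℤ).coeff n| ≤ 1 := by
  classical
  have cop : p.Coprime q := (Nat.coprime_primes hp hq).2 hpq.ne
  have hN : Nat.totient (p * q) = (p - 1) * (q - 1) := by
    rw [Nat.totient_mul cop, Nat.totient_prime hp, Nat.totient_prime hq]
  set N := Nat.totient (p * q)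
  have hp2 := hp.two_le
  have hkN : k < N :=
    hN ▸ (by omega : k < (p - 1) * 2).trans_le (Nat.mul_le_mul_left _ (by omega))
  have hNpq : N + p + q = p * q + 1 := by
    obtain ⟨p, rfl⟩ := Nat.exists_eq_add_one_of_ne_zero hp.ne_zero
    obtain ⟨q, rfl⟩ := Nat.exists_eq_add_one_of_ne_zero hq.ne_zero
    rw [hN, Nat.add_sub_cancel, Nat.add_sub_cancel]
    ring
  set r : ℤ[X] := X ^ (N + k) - cyclotomic (p * q) ℤ * ∑ i ∈ range (k + 1), X ^ i
  have hr (n : ℕ) : r.coeff n = (if n = N + k then 1 else 0) -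
      ((if n ∈ AddSubmonoid.closure {p, q} then 1 else 0) -
        if k + 1 ≤ n ∧ n - (k + 1) ∈ AddSubmonoid.closure {p, q} then 1 else 0) := by
    rw [coeff_sub, coeff_X_pow, coeff_cyclotomic_mul_geom_sum ℤ hp hq hpq.ne]
  have hhigh (n : ℕ) (hn : N ≤ n) : r.coeff n = 0 := by
    rw [hr, if_pos ((cop.mem_closure_pair_iff_add_ne hp.one_lt hpq (by omega)).2 (by omega)),
      cop.mem_closure_pair_iff_add_ne hp.one_lt hpq (by omega)]
    split_ifs <;> omega
  have hmod : X ^ (N + k) %ₘ cyclotomic (p * q) ℤ = r :=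
    (div_modByMonic_unique _ r (cyclotomic.monic _ ℤ) ⟨sub_add_cancel _ _,
      by rw [degree_cyclotomic]; exact (degree_lt_iff_coeff_zero _ _).2 hhigh⟩).2
  refine ⟨hmod, fun n => ?_⟩
  rw [hmod]
  rcases le_or_gt N n with hn | hn
  · simp [hhigh n hn]
  · rw [hr, if_neg (by omega)]
    split_ifs <;> norm_num
end

section
/- Let p < q be primes and 0 ≤ k < p - 1. The constant coefficient of the remainder of x^{φ(pq)+k} upon division by Φ_{pq}(x) equals -1. -/
/-!
Multiplying `Φ_{pq}` by `(X^p - 1)(X^q - 1)` gives `(X^{pq} - 1)(X - 1)`; comparing degrees shows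
`Φ_{pq} = X^{φ-1}(X - 1) + G` with `deg G ≤ φ - p`. Dividing `X^{φ+k}` (`k < p`) by such a monic
polynomial leaves quotient `1 + X + ⋯ + X^k` and remainder `X^{φ-1} - G (1 + X + ⋯ + X^k)`, whose
constant term is `-G(0) = -Φ_{pq}(0) = -1`.
-/

open Polynomial Finset
open scoped Nat

section Division

variable {R : Type*} [CommRing R] [Nontrivial R]

theorem X_pow_modByMonic_X_pow_mul_X_sub_one_add {n k : ℕ} {G : R[X]}
    (hG : G.natDegree + k < n + 1) :
    X ^ (n + 1 + k) %ₘ (X ^ n * (X - 1) + G) = X ^ n - G * ∑ i ∈ range (k + 1), X ^ i := by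
  have hF : IsMonicOfDegree (X ^ n * (X - 1) + G) (n + 1) :=
    ((isMonicOfDegree_X_pow R n).mul (isMonicOfDegree_X_sub_one 1)).add_right (by omega)
  have hQ : (∑ i ∈ range (k + 1), (X : R[X]) ^ i).natDegree ≤ k :=
    natDegree_sum_le_of_forall_le _ _ fun i hi =>
      (natDegree_X_pow_le i).trans (Nat.lt_succ_iff.mp (mem_range.mp hi))
  refine (div_modByMonic_unique (∑ i ∈ range (k + 1), X ^ i) _ hF.monic ⟨?_, ?_⟩).2
  · linear_combination X ^ n * geom_sum_mul (X : R[X]) (k + 1)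
  · apply degree_lt_degree
    rw [hF.natDegree_eq]
    refine (natDegree_sub_le _ _).trans_lt (max_lt ?_ ?_)
    · exact (natDegree_X_pow_le n).trans_lt n.lt_succ_self
    · exact (natDegree_mul_le.trans (Nat.add_le_add_left hQ _)).trans_lt hG

theorem coeff_zero_X_pow_modByMonic_X_pow_mul_X_sub_one_add {n k : ℕ} {G : R[X]} (hn : n ≠ 0)
    (hG : G.natDegree + k < n + 1) :
    (X ^ (n + 1 + k) %ₘ (X ^ n * (X - 1) + G)).coeff 0 = -G.coeff 0 := by
  rw [X_pow_modByMonic_X_pow_mul_X_sub_one_add hG, coeff_sub, mul_coeff_zero, coeff_X_pow,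
    if_neg (Ne.symm hn), finsetSum_coeff]
  simp [coeff_X_pow]

end Division

section Cyclotomic

variable {R : Type*} [CommRing R] {p q : ℕ}

theorem totient_prime_mul_prime_add_add (hp : p.Prime) (hq : q.Prime) (hpq : p ≠ q) :
    φ (p * q) + p + q = p * q + 1 := by
  rw [Nat.totient_mul ((Nat.coprime_primes hp hq).mpr hpq), Nat.totient_prime hp,
    Nat.totient_prime hq]
  zify [hp.one_le, hq.one_le]
  ring

theorem cyclotomic_mul_X_pow_sub_one_mul_X_pow_sub_one (hp : p.Prime) (hq : q.Prime)
    (hpq : p ≠ q) :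
    cyclotomic (p * q) R * (X ^ p - 1) * (X ^ q - 1) = (X ^ (p * q) - 1) * (X - 1) := by
  have := Fact.mk hq
  have h := congrArg (expand R p) (cyclotomic_prime_mul_X_sub_one R q)
  simp only [map_mul, map_sub, map_pow, expand_X, map_one,
    cyclotomic_expand_eq_cyclotomic_mul hp ((Nat.prime_dvd_prime_iff_eq hp hq).not.mpr hpq)] at h
  rw [mul_comm p q, pow_mul', ← h, ← cyclotomic_prime_mul_X_sub_one R q]
  ring

theorem natDegree_cyclotomic_sub_X_pow_mul_X_sub_one_add_le [Nontrivial R] (hp : p.Prime)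
    (hq : q.Prime) (hpq : p < q) {n : ℕ} (hn : φ (p * q) = n + 1) :
    (cyclotomic (p * q) R - X ^ n * (X - 1)).natDegree + p ≤ n + 1 := by
  have hsum := totient_prime_mul_prime_add_add hp hq hpq.ne
  rw [hn] at hsum
  set G := cyclotomic (p * q) R - X ^ n * (X - 1)
  have hA : IsMonicOfDegree ((X ^ p - 1) * (X ^ q - 1) : R[X]) (p + q) :=
    ((isMonicOfDegree_X_pow R p).sub (by simpa using hp.pos)).mul
      ((isMonicOfDegree_X_pow R q).sub (by simpa using hq.pos))
  have hGA : (X ^ p - 1) * (X ^ q - 1) * G =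
      (X - 1) * (X ^ (n + q) + X ^ (n + p) - X ^ n - 1) := by
    have hN : (X : R[X]) ^ (p * q) = X ^ n * X ^ p * X ^ q := by
      rw [← pow_add, ← pow_add]
      congr 1
      omega
    linear_combination cyclotomic_mul_X_pow_sub_one_mul_X_pow_sub_one (R := R) hp hq hpq.ne +
      hN * (X - 1)
  by_cases hG : G = 0
  · rw [hG, natDegree_zero]
    nlinarith [hp.two_le, hq.two_le]
  have hdeg := congrArg natDegree hGA
  rw [hA.monic.natDegree_mul' hG, hA.natDegree_eq] at hdeg
  have hrhs : ((X - 1) * (X ^ (n + q) + X ^ (n + p) - X ^ n - 1) : R[X]).natDegree ≤ n + q + 1 := by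
    compute_degree
    all_goals omega
  omega

end Cyclotomic

theorem constant_coeff_modByMonic (p q k : ℕ) (hp : p.Prime) (hq : q.Prime)
    (hpq : p < q) (hk : k < p - 1) :
    (X ^ (Nat.totient (p * q) + k) %ₘ cyclotomic (p * q) ℤ).coeff 0 = -1 := by
  obtain ⟨n, hn⟩ : ∃ n, φ (p * q) = n + 1 :=
    ⟨_, (Nat.succ_pred_eq_of_pos (Nat.totient_pos.mpr (Nat.mul_pos hp.pos hq.pos))).symm⟩
  have hdeg := natDegree_cyclotomic_sub_X_pow_mul_X_sub_one_add_le (R := ℤ) hp hq hpq hn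
  have hn0 : n ≠ 0 := by omega
  rw [hn, ← add_sub_cancel (X ^ n * (X - 1)) (cyclotomic (p * q) ℤ),
    coeff_zero_X_pow_modByMonic_X_pow_mul_X_sub_one_add hn0 (by omega), coeff_sub,
    cyclotomic_coeff_zero ℤ (Nat.one_lt_mul_iff.mpr ⟨hp.pos, hq.pos, Or.inl hp.one_lt⟩)]
  simp [hn0.symm]
end

section
/- Let p < q be primes and 0 ≤ k < p - 1. The coefficient of x^{φ(pq)-1} in the remainder of x^{φ(pq)+k} upon division by Φ_{pq}(x) equals 1. -/
/-! With `d = φ(pq)`, the identity `Φ_{pq} (X ^ p - 1) (X ^ q - 1) = (X ^ (p q) - 1) (X - 1)` and a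
degree count show `Φ_{pq} = X ^ d - X ^ (d - 1) + L` with `deg L ≤ d - p`. Since
`(1 + X + ⋯ + X ^ k) (X - 1) = X ^ (k + 1) - 1`, the remainder of `X ^ (d + k)` is
`X ^ (d - 1) - (1 + X + ⋯ + X ^ k) L`, and the second term has degree `≤ k + d - p < d - 1`. -/

open Polynomial Finset

section CyclotomicTop

variable {R : Type*} [CommRing R]

theorem cyclotomic_prime_mul_prime_mul_X_pow_sub_one {p q : ℕ} (hp : p.Prime) (hq : q.Prime)
    (hpq : p ≠ q) :
    cyclotomic (p * q) R * ((X ^ p - 1) * (X ^ q - 1)) = (X ^ (p * q) - 1) * (X - 1) := by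
  have : Fact q.Prime := ⟨hq⟩
  have hexpand : expand R p (cyclotomic q R) = cyclotomic (p * q) R * cyclotomic q R := by
    rw [mul_comm p q]
    exact cyclotomic_expand_eq_cyclotomic_mul hp (mt (Nat.prime_dvd_prime_iff_eq hp hq).mp hpq) R
  have hq_cyc : cyclotomic q R * (X - 1) = X ^ q - 1 := cyclotomic_prime_mul_X_sub_one R q
  have hexpand_mul : cyclotomic (p * q) R * cyclotomic q R * (X ^ p - 1) = X ^ (p * q) - 1 := by
    simpa [← hexpand, pow_mul] using congrArg (expand R p) hq_cyc
  linear_combination (X - 1) * hexpand_mul - cyclotomic (p * q) R * (X ^ p - 1) * hq_cyc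

theorem degree_sub_X_pow_sub_X_pow_add_le [Nontrivial R] {Φ : R[X]} {e p q : ℕ}
    (hp : 0 < p) (hpq : p ≤ q)
    (h : Φ * ((X ^ p - 1) * (X ^ q - 1)) = (X ^ (e + p + q) - 1) * (X - 1)) :
    (Φ - (X ^ (e + 1) - X ^ e)).degree + (p : WithBot ℕ) ≤ (e + 1 : ℕ) := by
  have hmonic {n : ℕ} (hn : 0 < n) : (X ^ n - 1 : R[X]).Monic := by
    simpa using monic_X_pow_sub_C (1 : R) hn.ne'
  have hdeg {n : ℕ} (hn : 0 < n) : (X ^ n - 1 : R[X]).degree = n := by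
    simpa using degree_X_pow_sub_C hn (1 : R)
  have hq : 0 < q := hp.trans_le hpq
  have hL : (Φ - (X ^ (e + 1) - X ^ e)) * ((X ^ p - 1) * (X ^ q - 1)) =
      (X - 1) * (X ^ (e + p) + X ^ (e + q) - X ^ e - 1) := by
    linear_combination h
  have hRHS : ((X - 1) * (X ^ (e + p) + X ^ (e + q) - X ^ e - 1) : R[X]).natDegree ≤
      1 + (e + q) := by
    compute_degree
    all_goals omega
  have hle := hL ▸ degree_le_of_natDegree_le hRHS
  rw [((hmonic hp).mul (hmonic hq)).degree_mul, (hmonic hq).degree_mul, hdeg hp, hdeg hq,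
    show ((1 + (e + q) : ℕ) : WithBot ℕ) = ↑(e + 1) + ↑q by push_cast; ring, ← add_assoc,
    WithBot.add_le_add_iff_right (WithBot.natCast_ne_bot q)] at hle
  exact hle

theorem degree_geom_sum_X_mul_lt {L : R[X]} {e k : ℕ} (hL : L.degree + k < e) :
    ((∑ i ∈ range (k + 1), X ^ i) * L).degree < (e : WithBot ℕ) := by
  have hT : (∑ i ∈ range (k + 1), X ^ i : R[X]).degree ≤ k :=
    (degree_sum_le _ _).trans <| Finset.sup_le fun i hi =>
      (degree_X_pow_le i).trans <| mod_cast Nat.lt_succ_iff.mp (mem_range.mp hi)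
  calc _ ≤ (∑ i ∈ range (k + 1), X ^ i : R[X]).degree + L.degree := degree_mul_le _ _
    _ ≤ L.degree + k := by rw [add_comm L.degree]; gcongr
    _ < e := hL

theorem X_pow_modByMonic_X_pow_sub_X_pow_add [Nontrivial R] {L : R[X]} {e k : ℕ}
    (hL : L.degree + k < e) :
    X ^ (e + 1 + k) %ₘ (X ^ (e + 1) - X ^ e + L) =
      X ^ e - (∑ i ∈ range (k + 1), X ^ i) * L := by
  have hLe : L.degree < e := (le_add_of_nonneg_right (Nat.cast_nonneg k)).trans_lt hL
  have hsub {f : R[X]} (hf : f.degree < e) : (X ^ e - f).degree < ↑(e + 1) :=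
    (degree_sub_le _ _).trans_lt <| max_lt ((degree_X_pow_le e).trans_lt (by norm_cast; omega))
      (hf.trans (by norm_cast; omega))
  have hΦ : (X ^ (e + 1) - (X ^ e - L)).degree = ↑(e + 1) := by
    rw [degree_sub_eq_left_of_degree_lt] <;> rw [degree_X_pow]
    exact hsub hLe
  rw [show X ^ (e + 1) - X ^ e + L = X ^ (e + 1) - (X ^ e - L) by ring]
  refine (div_modByMonic_unique (∑ i ∈ range (k + 1), X ^ i) _ (monic_X_pow_sub (hsub hLe))
    ⟨?_, hΦ ▸ hsub (degree_geom_sum_X_mul_lt hL)⟩).2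
  linear_combination X ^ e * geom_sum_mul (X : R[X]) (k + 1)

theorem coeff_X_pow_modByMonic_X_pow_sub_X_pow_add [Nontrivial R] {L : R[X]} {e k : ℕ}
    (hL : L.degree + k < e) : (X ^ (e + 1 + k) %ₘ (X ^ (e + 1) - X ^ e + L)).coeff e = 1 := by
  rw [X_pow_modByMonic_X_pow_sub_X_pow_add hL, coeff_sub, coeff_X_pow_self,
    coeff_eq_zero_of_degree_lt (degree_geom_sum_X_mul_lt hL), sub_zero]

end CyclotomicTop

theorem top_coeff_modByMonic (p q k : ℕ) (hp : p.Prime) (hq : q.Prime)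
    (hpq : p < q) (hk : k < p - 1) :
    (X ^ (Nat.totient (p * q) + k) %ₘ cyclotomic (p * q) ℤ).coeff
      (Nat.totient (p * q) - 1) = 1 := by
  obtain ⟨e, he⟩ := Nat.exists_eq_add_one_of_ne_zero
    (Nat.totient_pos.mpr (Nat.mul_pos hp.pos hq.pos)).ne'
  have hpq_eq : p * q = e + p + q := by
    rw [Nat.totient_mul ((Nat.coprime_primes hp hq).mpr hpq.ne), Nat.totient_prime hp,
      Nat.totient_prime hq] at he
    zify [hp.one_le, hq.one_le] at he ⊢
    linear_combination he
  have hident := cyclotomic_prime_mul_prime_mul_X_pow_sub_one (R := ℤ) hp hq hpq.ne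
  rw [he, Nat.add_sub_cancel, hpq_eq]
  rw [hpq_eq] at hident
  have hgap := degree_sub_X_pow_sub_X_pow_add_le hp.pos hpq.le hident
  set L := cyclotomic (e + p + q) ℤ - (X ^ (e + 1) - X ^ e)
  have hL : L.degree + k < e := by
    by_cases hL0 : L = 0
    · simp [hL0]
    rw [degree_eq_natDegree hL0] at hgap ⊢
    have : L.natDegree + p ≤ e + 1 := mod_cast hgap
    exact mod_cast (by omega : L.natDegree + k < e)
  rw [show cyclotomic (e + p + q) ℤ = X ^ (e + 1) - X ^ e + L by ring]
  exact coeff_X_pow_modByMonic_X_pow_sub_X_pow_add hL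
end

section
/- Let p < q be primes and p - 1 ≤ k ≤ q - 1. Then the remainder of x^{φ(pq)+k} upon division by Φ_{pq}(x) equals -x^{k-(p-1)} · Σ_{i=0}^{p-2} x^{qi}. -/
/-! Since `q` is a proper divisor of `pq`, `Φ_{pq}` divides `(X^{pq} - 1)/(X^q - 1) = ∑_{i<p} X^{qi}`.
As `φ(pq) + (p - 1) = q(p - 1)`, the difference between `X^{φ(pq)+k}` and the claimed remainder is
`X^{k-(p-1)} ∑_{i<p} X^{qi}`, hence a multiple of `Φ_{pq}`; and the claimed remainder has degree
`k - (p - 1) + q(p - 2) < φ(pq)`. -/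

open Polynomial Finset

theorem cyclotomic_mul_dvd_sum_range_X_pow {R : Type*} [CommRing R] {m q : ℕ} (hm : 1 < m)
    (hq : 0 < q) : cyclotomic (m * q) R ∣ ∑ i ∈ range m, X ^ (q * i) := by
  have hmem : q ∈ (m * q).properDivisors :=
    Nat.mem_properDivisors.mpr ⟨dvd_mul_left q m, (lt_mul_iff_one_lt_left hq).mpr hm⟩
  have hgeom : (X ^ q - 1) * ∑ i ∈ range m, (X : R[X]) ^ (q * i) = X ^ (m * q) - 1 := by
    simp only [pow_mul]
    rw [mul_comm, geom_sum_mul, ← pow_mul, ← pow_mul, mul_comm q m]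
  have hreg : IsLeftRegular ((X : R[X]) ^ q - 1) := by
    simpa using (monic_X_pow_sub_C (1 : R) hq.ne').isRegular.left
  rw [← hreg.dvd_cancel_left, hgeom]
  exact X_pow_sub_one_mul_cyclotomic_dvd_X_pow_sub_one_of_dvd R hmem

theorem natDegree_X_pow_mul_sum_range_X_pow_le {R : Type*} [Semiring R] (a q n : ℕ) :
    (X ^ a * ∑ i ∈ range n, (X : R[X]) ^ (q * i)).natDegree ≤ a + q * (n - 1) := by
  refine natDegree_mul_le.trans (add_le_add (natDegree_X_pow_le a) ?_)
  refine natDegree_sum_le_of_forall_le _ _ fun i hi => (natDegree_X_pow_le _).trans ?_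
  exact Nat.mul_le_mul_left q (by rw [mem_range] at hi; omega)

theorem modByMonic_middle_range (p q k : ℕ) (hp : p.Prime) (hq : q.Prime)
    (hpq : p < q) (hk1 : p - 1 ≤ k) (hk2 : k ≤ q - 1) :
    X ^ (Nat.totient (p * q) + k) %ₘ cyclotomic (p * q) ℤ =
      -(X ^ (k - (p - 1)) * ∑ i ∈ Finset.range (p - 1), X ^ (q * i)) := by
  have htot : Nat.totient (p * q) = (p - 1) * (q - 1) := by
    rw [Nat.totient_mul ((Nat.coprime_primes hp hq).mpr hpq.ne), Nat.totient_prime hp,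
      Nat.totient_prime hq]
  have hp1 : 1 ≤ p - 1 := by have := hp.two_le; omega
  have hexp : Nat.totient (p * q) + k = (k - (p - 1)) + q * (p - 1) := by
    rw [htot]
    zify [hk1, hp.one_le, hq.one_le]
    ring
  have hdeg : (k - (p - 1)) + q * (p - 1 - 1) < Nat.totient (p * q) := by
    rw [htot]
    zify [hk1, hp1, hp.one_le, hq.one_le] at hk2 ⊢
    nlinarith
  obtain ⟨c, hc⟩ := cyclotomic_mul_dvd_sum_range_X_pow (R := ℤ) hp.one_lt hq.pos
  refine (div_modByMonic_unique (X ^ (k - (p - 1)) * c) _ (cyclotomic.monic _ ℤ) ⟨?_, ?_⟩).2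
  · rw [← mul_left_comm, ← hc, hexp, pow_add, ← Nat.sub_add_cancel hp.one_le]
    simp only [Nat.add_sub_cancel, sum_range_succ]
    ring
  · refine degree_lt_degree ((natDegree_neg _).trans_lt ?_)
    rw [natDegree_cyclotomic]
    exact (natDegree_X_pow_mul_sum_range_X_pow_le _ _ _).trans_lt hdeg
end

section
/- Let p < q be primes. Then x^{pq-q} ≡ -Σ_{i=0}^{p-2} x^{qi} (mod Φ_{pq}(x)). -/
/-!
Since `q ∤ p`, `Φ_p(x^q) = Φ_{pq}(x) Φ_p(x)`, so `Φ_{pq}` divides `Φ_p(x^q) = ∑_{i<p} x^{qi}`,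
whose top term is `x^{pq-q}`.
-/

open Polynomial Finset

theorem cyclotomic_mul_prime_dvd_expand {R : Type*} [CommRing R] {n q : ℕ} (hq : q.Prime)
    (hn : ¬q ∣ n) : cyclotomic (n * q) R ∣ expand R q (cyclotomic n R) :=
  (cyclotomic_expand_eq_cyclotomic_mul hq hn R).symm ▸ dvd_mul_right _ _

theorem expand_cyclotomic_prime {R : Type*} [CommRing R] {p : ℕ} (hp : p.Prime) (q : ℕ) :
    expand R q (cyclotomic p R) = ∑ i ∈ range p, X ^ (q * i) := by
  have := Fact.mk hp
  simp only [cyclotomic_prime, map_sum, map_pow, expand_X, ← pow_mul]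

theorem pow_pq_sub_q_congr (p q : ℕ) (hp : p.Prime) (hq : q.Prime)
    (hpq : p < q) :
    cyclotomic (p * q) ℤ ∣
      (X ^ (p * q - q) + ∑ i ∈ Finset.range (p - 1), X ^ (q * i)) := by
  have hqp : ¬q ∣ p := fun h => (Nat.le_of_dvd hp.pos h).not_gt hpq
  have hsplit : X ^ (p * q - q) + ∑ i ∈ range (p - 1), (X : ℤ[X]) ^ (q * i)
      = ∑ i ∈ range p, X ^ (q * i) := by
    obtain ⟨m, rfl⟩ := Nat.exists_eq_add_one_of_ne_zero hp.ne_zero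
    rw [sum_range_succ, add_comm, Nat.add_sub_cancel, add_one_mul, Nat.add_sub_cancel, mul_comm]
  rw [hsplit, ← expand_cyclotomic_prime hp]
  exact cyclotomic_mul_prime_dvd_expand hq hqp
end

section
/- Let p < q be primes and 0 ≤ k < pq - φ(pq). Let r(x) be the remainder of x^{φ(pq)+k} modulo Φ_{pq}(x). Then the reverse polynomial x^{φ(pq)-1} · r(1/x) is congruent to x^{pq-1-k} modulo Φ_{pq}(x); equivalently, the remainder of x^{pq-1-k} modulo Φ_{pq}(x) is the coefficient-reversal (in degree φ(pq)-1) of r(x). -/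
/-!
The cyclotomic polynomial `Φ_n` (`n > 1`) is palindromic, its roots being closed under
inversion. Reflecting the division `X ^ (φ + k) = Φ_n * s + r` in degree `φ + k` therefore gives
`1 = Φ_n * s' + X ^ (k + 1) * r'` with `r'` the reversal of `r` in degree `φ - 1`. Multiplying
by `X ^ (n - 1 - k)` and using `X ^ n ≡ 1` yields `r' ≡ X ^ (n - 1 - k)` modulo `Φ_n`, and `r'`
has degree `< φ`, so it is the remainder.
-/

open Polynomial

namespace Polynomial

lemma reflect_add_eq_X_pow_mul {R : Type*} [Semiring R] {f : R[X]} {N : ℕ}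
    (hf : f.natDegree ≤ N) (m : ℕ) : f.reflect (m + N) = X ^ m * f.reflect N := by
  simpa [reflect_one] using reflect_mul 1 f (F := m) (by simp) hf

lemma reflect_cyclotomic_int {n : ℕ} (hn : 1 < n) :
    (cyclotomic n ℤ).reflect n.totient = cyclotomic n ℤ := by
  have hpos : 0 < n := by omega
  have hdeg : (cyclotomic n ℤ).natDegree = n.totient := natDegree_cyclotomic n ℤ
  set ζ : ℂ := Complex.exp (2 * Real.pi * Complex.I / n)
  have hζ : IsPrimitiveRoot ζ n := Complex.isPrimitiveRoot_exp n hpos.ne'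
  have : Invertible ζ := invertibleOfNonzero (hζ.ne_zero hpos.ne')
  have hroot : aeval ζ⁻¹ ((cyclotomic n ℤ).reflect n.totient) = 0 := by
    rw [aeval_def, ← invOf_eq_inv, eval₂_reflect_eq_zero_iff _ _ _ _ hdeg.le, ← aeval_def,
      cyclotomic_eq_minpoly hζ hpos, minpoly.aeval]
  have hdvd : cyclotomic n ℤ ∣ (cyclotomic n ℤ).reflect n.totient := by
    simpa only [← cyclotomic_eq_minpoly hζ.inv hpos] using
      minpoly.isIntegrallyClosed_dvd (hζ.inv.isIntegral hpos) hroot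
  have hle : ((cyclotomic n ℤ).reflect n.totient).natDegree ≤ n.totient :=
    natDegree_reflect_le.trans (by rw [hdeg, max_self])
  have hmonic : ((cyclotomic n ℤ).reflect n.totient).Monic := by
    refine monic_of_natDegree_le_of_coeff_eq_one _ hle ?_
    rw [coeff_reflect, revAt_le le_rfl, Nat.sub_self, cyclotomic_coeff_zero ℤ hn]
  exact eq_of_monic_of_dvd_of_natDegree_le (cyclotomic.monic n ℤ) hmonic hdvd
    (hle.trans hdeg.ge)

section Palindromic

variable {R : Type*} [CommRing R] {Φ : R[X]} {d : ℕ}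

lemma natDegree_modByMonic_le_sub_one (p : R[X]) (hΦ : Φ.Monic) :
    (p %ₘ Φ).natDegree ≤ Φ.natDegree - 1 := by
  rcases eq_or_ne Φ 1 with rfl | hΦ1
  · simp
  · have := natDegree_modByMonic_lt p hΦ hΦ1
    omega

lemma dvd_X_pow_mul_reflect_modByMonic_sub_one [Nontrivial R] (hΦ : Φ.Monic)
    (hdeg : Φ.natDegree = d) (hd : 0 < d) (hpal : Φ.reflect d = Φ) (k : ℕ) :
    Φ ∣ X ^ (k + 1) * (X ^ (d + k) %ₘ Φ).reflect (d - 1) - 1 := by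
  set r := X ^ (d + k) %ₘ Φ
  set s := X ^ (d + k) /ₘ Φ
  have hr : r.natDegree ≤ d - 1 := hdeg ▸ natDegree_modByMonic_le_sub_one _ hΦ
  have hs : s.natDegree ≤ k := by
    rw [natDegree_divByMonic _ hΦ, natDegree_X_pow, hdeg]
    omega
  have hreflect : (1 : R[X]) = Φ * s.reflect k + X ^ (k + 1) * r.reflect (d - 1) := by
    calc (1 : R[X]) = (X ^ (d + k)).reflect (d + k) := by
          rw [reflect_monomial, revAt_le le_rfl, Nat.sub_self, pow_zero]
      _ = (Φ * s + r).reflect (d + k) := by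
          rw [← modByMonic_add_div (X ^ (d + k)) Φ, add_comm (Φ * s)]
      _ = Φ * s.reflect k + X ^ (k + 1) * r.reflect (d - 1) := by
          rw [reflect_add, reflect_mul Φ s hdeg.le hs, hpal,
            show d + k = (k + 1) + (d - 1) by omega, reflect_add_eq_X_pow_mul hr]
  exact ⟨-s.reflect k, by linear_combination -hreflect⟩

lemma X_pow_modByMonic_eq_reflect [Nontrivial R] (hΦ : Φ.Monic) (hdeg : Φ.natDegree = d)
    (hd : 0 < d) (hpal : Φ.reflect d = Φ) {n k : ℕ} (hn : Φ ∣ X ^ n - 1) (hk : k < n) :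
    X ^ (n - 1 - k) %ₘ Φ = (X ^ (d + k) %ₘ Φ).reflect (d - 1) := by
  set g := (X ^ (d + k) %ₘ Φ).reflect (d - 1)
  have hg := dvd_X_pow_mul_reflect_modByMonic_sub_one hΦ hdeg hd hpal k
  rw [show n = (n - 1 - k) + (k + 1) by omega] at hn
  have hcong : Φ ∣ X ^ (n - 1 - k) - g := by
    convert dvd_sub (hn.mul_right g) (hg.mul_left (X ^ (n - 1 - k))) using 1
    ring
  have hg_deg : g.degree < Φ.degree := by
    refine degree_lt_degree (natDegree_reflect_le.trans_lt ?_)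
    have := hdeg ▸ natDegree_modByMonic_le_sub_one (X ^ (d + k)) hΦ
    omega
  rw [modByMonic_eq_of_dvd_sub hΦ hcong, (modByMonic_eq_self_iff hΦ).2 hg_deg]

end Palindromic

end Polynomial

theorem modByMonic_reflect_general (p q k : ℕ) (hk : k < p * q - Nat.totient (p * q)) :
    X ^ (p * q - 1 - k) %ₘ cyclotomic (p * q) ℤ =
      (X ^ (Nat.totient (p * q) + k) %ₘ cyclotomic (p * q) ℤ).reflect
        (Nat.totient (p * q) - 1) := by
  set n := p * q
  have hn : 1 < n := by
    by_contra! h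
    interval_cases n <;> simp at hk
  exact X_pow_modByMonic_eq_reflect (cyclotomic.monic n ℤ) (natDegree_cyclotomic n ℤ)
    (Nat.totient_pos.2 (by omega)) (reflect_cyclotomic_int hn)
    (cyclotomic.dvd_X_pow_sub_one n ℤ) (by omega)

theorem modByMonic_reflect (p q k : ℕ) (hp : p.Prime) (hq : q.Prime)
    (hpq : p < q) (hk : k < p * q - Nat.totient (p * q)) :
    X ^ (p * q - 1 - k) %ₘ cyclotomic (p * q) ℤ =
      (X ^ (Nat.totient (p * q) + k) %ₘ cyclotomic (p * q) ℤ).reflect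
        (Nat.totient (p * q) - 1) :=
  modByMonic_reflect_general p q k hk
end

section
/- Let p < q be primes. For every integer k ≥ 0, the remainder of x^k upon division by Φ_{pq}(x) has all coefficients in {-1, 0, 1}. -/
/-!
Since `Φ_{pq} ∣ X^{pq} - 1` we may assume `k < pq`; put `c = pq - k`. The cofactor
`G = (X^{pq} - 1) / Φ_{pq}` is `∑_{i<p+q} X^i - ∑_{i<p} X^i - ∑_{i<q} X^i`, and the quotient of
`X^k = X^{pq} / X^c` by `Φ_{pq}` is the part of `G` of degree `≥ c`, divided by `X^c`.
Multiplying by `X^{pq} - 1` and using `Φ_{pq} (X^{pq} - 1) = (X - 1) Φ_p(X^q) Φ_q(X^p)` turns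
each coefficient of the remainder into a signed sum of four values of the indicator of
`{q t + p s | t < p, s < q}`. Below `pq` this set is closed under adding `p` or `q`, and contains
`i` whenever it contains both `i + p` and `i + q`; this bounds the sum by `1` in absolute value.
-/

open Polynomial Finset

theorem geom_sum_eq_min_add_pow_mul {R : Type*} [CommSemiring R] (x : R) (j c : ℕ) :
    ∑ i ∈ range j, x ^ i = ∑ i ∈ range (min j c), x ^ i + x ^ c * ∑ i ∈ range (j - c), x ^ i := by
  rcases le_total j c with h | h
  · simp [min_eq_left h, Nat.sub_eq_zero_of_le h]
  · obtain ⟨i, rfl⟩ := Nat.exists_eq_add_of_le h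
    simp [sum_range_add, pow_add, mul_sum]

namespace Polynomial

variable {R : Type*} [CommRing R]

theorem geom_sum_X_mem_degreeLT {m c : ℕ} (h : m ≤ c) :
    ∑ i ∈ range m, (X : R[X]) ^ i ∈ degreeLT R c :=
  Submodule.sum_mem _ fun i hi ↦ mem_degreeLT.2 <|
    (degree_X_pow_le i).trans_lt (by exact_mod_cast (mem_range.1 hi).trans_le h)

theorem X_pow_modByMonic_eq_X_pow_mod {Φ : R[X]} (hΦ : Φ.Monic) {N : ℕ} (h : Φ ∣ X ^ N - 1)
    (k : ℕ) : X ^ k %ₘ Φ = X ^ (k % N) %ₘ Φ := by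
  refine modByMonic_eq_of_dvd_sub hΦ (h.trans ?_)
  have : (X : R[X]) ^ k - X ^ (k % N) = ((X ^ N) ^ (k / N) - 1 ^ (k / N)) * X ^ (k % N) := by
    rw [← pow_mul, one_pow, sub_mul, one_mul, ← pow_add, Nat.div_add_mod]
  rw [this]
  exact (sub_dvd_pow_sub_pow _ _ _).mul_right _

variable [Nontrivial R]

theorem X_pow_modByMonic_eq_sub_mul {Φ G L Q : R[X]} {k c : ℕ} (hΦ : Φ.Monic) (hc : 0 < c)
    (hΦG : Φ * G = X ^ (k + c) - 1) (hG : G = L + X ^ c * Q) (hL : L.degree < c) :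
    X ^ k %ₘ Φ = X ^ k - Φ * Q := by
  refine (div_modByMonic_unique Q _ hΦ ⟨by ring, ?_⟩).2
  set r := X ^ k - Φ * Q
  have hr : X ^ c * r = 1 + Φ * L := by
    rw [hG, pow_add] at hΦG
    linear_combination -hΦG
  by_cases hr0 : r = 0
  · rw [hr0, degree_zero, bot_lt_iff_ne_bot, Ne, degree_eq_bot]
    exact hΦ.ne_zero
  refine degree_lt_degree ?_
  have hLc : L.natDegree < c := by
    by_cases hL0 : L = 0
    · simpa [hL0] using hc
    · exact (natDegree_lt_iff_degree_lt hL0).2 hL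
  have : r.natDegree + c ≤ Φ.natDegree + L.natDegree := by
    rw [← natDegree_X_pow_mul c hr0, hr]
    refine (natDegree_add_le _ _).trans (max_le (by simp) natDegree_mul_le)
  omega

theorem coeff_X_pow_modByMonic_of_le {Φ : R[X]} (hΦ : Φ.Monic) {k n : ℕ} (h : k ≤ n) :
    (X ^ k %ₘ Φ).coeff n = 0 ∨ (X ^ k %ₘ Φ).coeff n = 1 := by
  by_cases hk : k < Φ.natDegree
  · have hdeg : (X ^ k : R[X]).degree < Φ.degree := by
      rw [degree_X_pow, degree_eq_natDegree hΦ.ne_zero]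
      exact_mod_cast hk
    rw [(modByMonic_eq_self_iff hΦ).2 hdeg, coeff_X_pow]
    split_ifs <;> simp
  · left
    refine coeff_eq_zero_of_degree_lt ((degree_modByMonic_lt _ hΦ).trans_le ?_)
    rw [degree_eq_natDegree hΦ.ne_zero]
    exact_mod_cast (not_lt.1 hk).trans h

end Polynomial

/-- For `0 ≤ i < p * q` and coprime `p`, `q`, this says that `i` lies in the numerical semigroup
generated by `p` and `q`. -/
def IsBoxSum (p q : ℕ) (i : ℤ) : Prop := ∃ t < p, ∃ s < q, (q * t + p * s : ℤ) = i

open scoped Classical in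
noncomputable def boxInd (p q : ℕ) (i : ℤ) : ℤ := if IsBoxSum p q i then 1 else 0

section BoxSum

variable {p q : ℕ} {i : ℤ}

theorem IsBoxSum.nonneg (h : IsBoxSum p q i) : 0 ≤ i := by
  obtain ⟨t, -, s, -, rfl⟩ := h
  positivity

theorem IsBoxSum.add_left (h : IsBoxSum p q i) (hi : i + p < p * q) : IsBoxSum p q (i + p) := by
  obtain ⟨t, ht, s, hs, rfl⟩ := h
  refine ⟨t, ht, s + 1, ?_, by push_cast; ring⟩
  by_contra! hs'
  have : (q : ℤ) ≤ s + 1 := by exact_mod_cast hs'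
  nlinarith

theorem IsBoxSum.add_right (h : IsBoxSum p q i) (hi : i + q < p * q) : IsBoxSum p q (i + q) := by
  obtain ⟨t, ht, s, hs, rfl⟩ := h
  refine ⟨t + 1, ?_, s, hs, by push_cast; ring⟩
  by_contra! ht'
  have : (p : ℤ) ≤ t + 1 := by exact_mod_cast ht'
  nlinarith

theorem IsBoxSum.of_add_left_of_add_right (hpq : p.Coprime q) (hp : IsBoxSum p q (i + p))
    (hq : IsBoxSum p q (i + q)) (hi : i + p + q < p * q) : IsBoxSum p q i := by
  obtain ⟨t, ht, s, hs, hts⟩ := hp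
  obtain ⟨t', ht', s', hs', hts'⟩ := hq
  rcases Nat.eq_zero_or_pos s with rfl | hs0
  · rcases Nat.eq_zero_or_pos t' with rfl | ht0
    · -- `q (t + 1) = p (s' + 1)` forces `p ∣ t + 1`, hence `i + p + q ≥ p q`
      have heq : q * (t + 1) = p * (s' + 1) := by
        have : (q * (t + 1) : ℤ) = p * (s' + 1) := by push_cast at hts hts' ⊢; linarith
        exact_mod_cast this
      have hdvd : p ∣ t + 1 := hpq.dvd_of_dvd_mul_left ⟨s' + 1, heq⟩
      have : (p : ℤ) ≤ t + 1 := by exact_mod_cast Nat.le_of_dvd t.succ_pos hdvd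
      push_cast at hts
      nlinarith
    · exact ⟨t' - 1, by omega, s', hs', by push_cast [Nat.cast_sub ht0]; linarith⟩
  · exact ⟨t, ht, s - 1, by omega, by push_cast [Nat.cast_sub hs0]; linarith⟩

theorem injOn_mul_add_mul (hpq : p.Coprime q) :
    Set.InjOn (fun ts : ℕ × ℕ ↦ q * ts.1 + p * ts.2) (range p ×ˢ range q : Finset _) := by
  rintro ⟨t, s⟩ hts ⟨t', s'⟩ hts' h
  simp only [coe_product, coe_range, Set.mem_prod, Set.mem_Iio] at hts hts' h
  have ht : q * t ≡ q * t' [MOD p] := by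
    simpa only [Nat.ModEq, mul_comm p, Nat.add_mul_mod_self_right] using congrArg (· % p) h
  have ht : t = t' := by
    simpa [Nat.ModEq, Nat.mod_eq_of_lt hts.1, Nat.mod_eq_of_lt hts'.1] using
      Nat.ModEq.cancel_left_of_coprime hpq ht
  subst ht
  refine Prod.ext rfl (Nat.eq_of_mul_eq_mul_left (Nat.zero_lt_of_lt hts.1) ?_)
  simp only at h ⊢
  omega

theorem boxInd_nonneg (i : ℤ) : 0 ≤ boxInd p q i := by
  unfold boxInd; split_ifs <;> norm_num

theorem boxInd_le_one (i : ℤ) : boxInd p q i ≤ 1 := by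
  unfold boxInd; split_ifs <;> norm_num

theorem boxInd_of_isBoxSum (h : IsBoxSum p q i) : boxInd p q i = 1 := if_pos h

theorem boxInd_le_boxInd_add_left (hi : i + p < p * q) : boxInd p q i ≤ boxInd p q (i + p) := by
  by_cases h : IsBoxSum p q i
  · rw [boxInd_of_isBoxSum h, boxInd_of_isBoxSum (h.add_left hi)]
  · rw [boxInd, if_neg h]
    exact boxInd_nonneg _

theorem boxInd_le_boxInd_add_right (hi : i + q < p * q) : boxInd p q i ≤ boxInd p q (i + q) := by
  by_cases h : IsBoxSum p q i
  · rw [boxInd_of_isBoxSum h, boxInd_of_isBoxSum (h.add_right hi)]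
  · rw [boxInd, if_neg h]
    exact boxInd_nonneg _

theorem boxInd_add_left_add_boxInd_add_right_le (hpq : p.Coprime q) (hi : i + p + q < p * q) :
    boxInd p q (i + p) + boxInd p q (i + q) ≤ 1 + boxInd p q i := by
  by_cases h : IsBoxSum p q (i + p) ∧ IsBoxSum p q (i + q)
  · rw [boxInd_of_isBoxSum h.1, boxInd_of_isBoxSum h.2,
      boxInd_of_isBoxSum (h.1.of_add_left_of_add_right hpq h.2 hi)]
  · unfold boxInd
    split_ifs <;> simp_all

theorem abs_boxInd_combination_le_one (hpq : p.Coprime q) {c n : ℕ} (h : n + c < p * q) :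
    |boxInd p q (n - (p + q - c : ℕ)) - boxInd p q (n - (p - c : ℕ))
      - boxInd p q (n - (q - c : ℕ)) + boxInd p q n| ≤ 1 := by
  have h0 := boxInd_nonneg (p := p) (q := q)
  have h1 := boxInd_le_one (p := p) (q := q)
  rw [abs_le]
  rcases le_or_gt (p + q) c with hc | hc
  · rw [Nat.sub_eq_zero_of_le hc, Nat.sub_eq_zero_of_le (by omega : p ≤ c),
      Nat.sub_eq_zero_of_le (by omega : q ≤ c)]
    norm_num
  set a : ℤ := n - (p + q - c : ℕ)
  rcases le_or_gt p c with hpc | hpc <;> rcases le_or_gt q c with hqc | hqc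
  · rw [Nat.sub_eq_zero_of_le hpc, Nat.sub_eq_zero_of_le hqc, Nat.cast_zero, sub_zero]
    have := h0 a; have := h1 a; have := h0 n; have := h1 n
    constructor <;> linarith
  · rw [Nat.sub_eq_zero_of_le hpc, Nat.cast_zero, sub_zero,
      show (n : ℤ) - (q - c : ℕ) = a + p by omega]
    have := boxInd_le_boxInd_add_left (p := p) (q := q) (i := a) (by omega)
    have := h0 a; have := h1 (a + p)
    constructor <;> linarith
  · rw [Nat.sub_eq_zero_of_le hqc, Nat.cast_zero, sub_zero,
      show (n : ℤ) - (p - c : ℕ) = a + q by omega]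
    have := boxInd_le_boxInd_add_right (p := p) (q := q) (i := a) (by omega)
    have := h0 a; have := h1 (a + q)
    constructor <;> linarith
  · rw [show (n : ℤ) - (p - c : ℕ) = a + q by omega, show (n : ℤ) - (q - c : ℕ) = a + p by omega]
    have := boxInd_le_boxInd_add_left (p := p) (q := q) (i := a) (by omega)
    have := boxInd_add_left_add_boxInd_add_right_le (i := a) hpq (by omega)
    have := h0 (a + q); have := h0 n; have := h1 n
    constructor <;> linarith

end BoxSum

noncomputable def boxSumPoly (p q : ℕ) : ℤ[X] := ∑ t ∈ range p, ∑ s ∈ range q, X ^ (q * t + p * s)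

section Cyclotomic

variable {p q : ℕ}

theorem coeff_boxSumPoly (hpq : p.Coprime q) (i : ℕ) :
    (boxSumPoly p q).coeff i = boxInd p q i := by
  rw [boxSumPoly, ← sum_product' (f := fun t s ↦ (X : ℤ[X]) ^ (q * t + p * s)),
    ← sum_image (g := fun ts : ℕ × ℕ ↦ q * ts.1 + p * ts.2) (f := fun j ↦ (X : ℤ[X]) ^ j)
      (injOn_mul_add_mul hpq), finsetSum_coeff]
  simp only [coeff_X_pow, sum_ite_eq, boxInd, IsBoxSum]
  congr 1
  simp only [mem_image, mem_product, mem_range, Prod.exists, and_assoc, exists_and_left]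
  norm_cast

theorem coeff_X_pow_mul_boxSumPoly (hpq : p.Coprime q) (j n : ℕ) :
    (X ^ j * boxSumPoly p q).coeff n = boxInd p q (n - j) := by
  rw [coeff_X_pow_mul']
  split_ifs with h
  · rw [coeff_boxSumPoly hpq, Nat.cast_sub h]
  · rw [boxInd, if_neg fun h' ↦ ?_]
    have := h'.nonneg
    omega

variable {R : Type*} [CommRing R]

theorem cyclotomic_mul_cyclotomic_prime (hp : p.Prime) (hq : q.Prime) (hpq : p ≠ q) :
    cyclotomic (p * q) R * cyclotomic p R = ∑ t ∈ range p, X ^ (q * t) := by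
  have := Fact.mk hp
  have hqp : ¬q ∣ p := by rwa [Nat.prime_dvd_prime_iff_eq hq hp, eq_comm]
  rw [← cyclotomic_expand_eq_cyclotomic_mul hq hqp, cyclotomic_prime, map_sum]
  simp [pow_mul]

theorem cyclotomic_mul_geom_sum_sub (hp : p.Prime) (hq : q.Prime) (hpq : p ≠ q) :
    cyclotomic (p * q) R * (∑ i ∈ range (p + q), X ^ i - ∑ i ∈ range p, X ^ i
      - ∑ i ∈ range q, X ^ i) = X ^ (p * q) - 1 := by
  have := Fact.mk hp
  have hG : ∑ i ∈ range (p + q), (X : R[X]) ^ i - ∑ i ∈ range p, X ^ i - ∑ i ∈ range q, X ^ i =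
      cyclotomic p R * (X ^ q - 1) := by
    rw [add_comm p q, sum_range_add, cyclotomic_prime]
    simp only [pow_add, ← mul_sum]
    ring
  rw [hG, ← mul_assoc, cyclotomic_mul_cyclotomic_prime hp hq hpq]
  simp only [pow_mul]
  rw [geom_sum_mul, ← pow_mul, ← pow_mul, mul_comm q]

theorem boxSumPoly_eq_mul (p q : ℕ) :
    boxSumPoly p q = (∑ t ∈ range p, X ^ (q * t)) * ∑ s ∈ range q, X ^ (p * s) := by
  simp only [boxSumPoly, sum_mul_sum, pow_add]

theorem cyclotomic_mul_X_pow_sub_one (hp : p.Prime) (hq : q.Prime) (hpq : p ≠ q) :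
    cyclotomic (p * q) ℤ * (X ^ (p * q) - 1) = (X - 1) * boxSumPoly p q := by
  have := Fact.mk hp
  have hX : (X : ℤ[X]) ^ (p * q) - 1 =
      cyclotomic p ℤ * (X - 1) * ∑ s ∈ range q, X ^ (p * s) := by
    simp only [pow_mul]
    rw [cyclotomic_prime_mul_X_sub_one, mul_comm, geom_sum_mul]
  rw [hX, boxSumPoly_eq_mul, ← cyclotomic_mul_cyclotomic_prime hp hq hpq]
  ring

theorem coeff_X_pow_modByMonic_cyclotomic (hp : p.Prime) (hq : q.Prime) (hpq : p ≠ q)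
    {k c n : ℕ} (hkc : k + c = p * q) (hc : 0 < c) (hn : n < k) :
    (X ^ k %ₘ cyclotomic (p * q) ℤ).coeff n =
      boxInd p q (n - (p + q - c : ℕ)) - boxInd p q (n - (p - c : ℕ))
        - boxInd p q (n - (q - c : ℕ)) + boxInd p q n := by
  have hcop : p.Coprime q := (Nat.coprime_primes hp hq).2 hpq
  set W : ℕ → ℤ[X] := fun j ↦ ∑ i ∈ range j, X ^ i
  set Q := W (p + q - c) - W (p - c) - W (q - c)
  have hmod : X ^ k %ₘ cyclotomic (p * q) ℤ = X ^ k - cyclotomic (p * q) ℤ * Q := by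
    have hΦG : cyclotomic (p * q) ℤ * (W (p + q) - W p - W q) = X ^ (k + c) - 1 := by
      rw [hkc]
      exact cyclotomic_mul_geom_sum_sub hp hq hpq
    refine X_pow_modByMonic_eq_sub_mul (cyclotomic.monic _ ℤ) hc hΦG
      (L := W (min (p + q) c) - W (min p c) - W (min q c)) ?_ ?_
    · simp only [W, Q]
      rw [geom_sum_eq_min_add_pow_mul X (p + q) c, geom_sum_eq_min_add_pow_mul X p c,
        geom_sum_eq_min_add_pow_mul X q c]
      ring
    · refine mem_degreeLT.1 (Submodule.sub_mem _ (Submodule.sub_mem _ ?_ ?_) ?_) <;>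
        exact geom_sum_X_mem_degreeLT (min_le_right _ _)
  have hQ : (X - 1) * Q = X ^ (p + q - c) - X ^ (p - c) - X ^ (q - c) + 1 := by
    simp only [Q, W, mul_sub, mul_geom_sum]
    ring
  have key : (X ^ (p * q) - 1) * (cyclotomic (p * q) ℤ * Q) =
      X ^ (p + q - c) * boxSumPoly p q - X ^ (p - c) * boxSumPoly p q
        - X ^ (q - c) * boxSumPoly p q + boxSumPoly p q := by
    rw [← mul_assoc, mul_comm _ (cyclotomic _ _), cyclotomic_mul_X_pow_sub_one hp hq hpq,
      mul_right_comm, hQ]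
    ring
  -- below degree `p * q`, multiplying by `X ^ (p * q) - 1` only changes the sign
  have hcoeff := congrArg (coeff · n) key
  simp only [sub_mul, one_mul, coeff_sub, coeff_add, coeff_X_pow_mul',
    if_neg (by omega : ¬p * q ≤ n), coeff_X_pow_mul_boxSumPoly hcop] at hcoeff
  rw [hmod, coeff_sub, coeff_X_pow, if_neg (by omega), hcoeff, coeff_boxSumPoly hcop]

end Cyclotomic

theorem modByMonic_pow_coeff_le_one (p q : ℕ) (hp : p.Prime) (hq : q.Prime)
    (hpq : p < q) (k : ℕ) :
    ∀ n, |(X ^ k %ₘ cyclotomic (p * q) ℤ).coeff n| ≤ 1 := by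
  intro n
  have hΦ := cyclotomic.monic (p * q) ℤ
  rw [X_pow_modByMonic_eq_X_pow_mod hΦ (cyclotomic.dvd_X_pow_sub_one _ _) k]
  have hk : k % (p * q) < p * q := Nat.mod_lt _ (Nat.mul_pos hp.pos hq.pos)
  rcases lt_or_ge n (k % (p * q)) with hn | hn
  · rw [coeff_X_pow_modByMonic_cyclotomic hp hq hpq.ne (Nat.add_sub_of_le hk.le) (by omega) hn]
    exact abs_boxInd_combination_le_one ((Nat.coprime_primes hp hq).2 hpq.ne) (by omega)
  · rcases coeff_X_pow_modByMonic_of_le hΦ hn with h | h <;> simp [h]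
end

section
/- Let p < q be primes, 0 ≤ k < φ(pq), and 0 ≤ j < p. Among i ∈ {0, 1, ..., q-1}, there are at most two values of i for which the k-th coefficient of the remainder of x^{j+ip} modulo Φ_{pq}(x) is nonzero; moreover these coefficients sum to zero over all i, so either all are zero or exactly one is +1 and one is -1. -/
/-!
Cells `(x, y)` with `x < q`, `y < p` index the residues mod `pq` through `x p + y q`. In
`ℤ[X]/Φ_{pq}` we have `X^{pq} = 1`, and every row `∑_x X^{xp}` and every column `∑_y X^{yq}`
vanishes because `Φ_{pq}` divides `Φ_q(X^p)` and `Φ_p(X^q)`. Hence an integer function `c` on the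
cells represents `X^{αp+βq}` as soon as `c - δ_{(α,β)}` has the form `g(x) + h(y)`, and it is the
remainder once it vanishes on the cells whose exponent mod `pq` is at least `N = (p-1)(q-1)`. Such
a `c` with values in `{-1, 0, 1}` is explicit on each of the ranges `[0, N)`, `[N, N+p)`,
`[N+p, N+q)`, `[N+q, pq)` of `m = αp + βq`.

Along `m = j + ip` the index `β` is fixed. If `k` sits in the cell `(a, b)`, a coefficient `+1` at
`k` forces `m = k` when `b = β`, `m ∈ [N, N+p)` when `b > β` and `m ∈ [N+q, N+q+p)` when `b < β`;
each window meets the progression `j + ip` at most once. Since `Φ_{pq} ∣ X^j Φ_q(X^p)`, the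
coefficients sum to zero, so a single `+1` is balanced by a single `-1`.
-/

open Polynomial Finset

theorem Finset.forall_eq_zero_or_exists_eq_one_eq_neg_one {ι : Type*} {s : Finset ι}
    {f : ι → ℤ} (habs : ∀ i ∈ s, |f i| ≤ 1) (hsum : ∑ i ∈ s, f i = 0)
    (hone : ∀ i ∈ s, ∀ i' ∈ s, f i = 1 → f i' = 1 → i = i') :
    (∀ i ∈ s, f i = 0) ∨ ∃ i₁ ∈ s, ∃ i₂ ∈ s, i₁ ≠ i₂ ∧ f i₁ = 1 ∧ f i₂ = -1 ∧
      ∀ i ∈ s, i ≠ i₁ → i ≠ i₂ → f i = 0 := by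
  classical
  by_cases hpos : ∃ i₁ ∈ s, f i₁ = 1
  · obtain ⟨i₁, hi₁, hf₁⟩ := hpos
    have hle : ∀ i ∈ s.erase i₁, f i ≤ 0 := fun i hi => by
      obtain ⟨hne, hi⟩ := mem_erase.mp hi
      have := abs_le.mp (habs i hi)
      by_contra! hgt
      exact hne (hone i hi i₁ hi₁ (by omega) hf₁)
    have hrest : ∑ i ∈ s.erase i₁, f i = -1 := by
      rw [← add_sum_erase s f hi₁, hf₁] at hsum
      omega
    obtain ⟨i₂, hi₂, hf₂⟩ : ∃ i₂ ∈ s.erase i₁, f i₂ ≠ 0 :=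
      exists_ne_zero_of_sum_ne_zero (by rw [hrest]; norm_num)
    have hf₂ : f i₂ = -1 := by
      have := abs_le.mp (habs i₂ (mem_of_mem_erase hi₂))
      have := hle i₂ hi₂
      omega
    have hrest₂ : ∑ i ∈ (s.erase i₁).erase i₂, f i = 0 := by
      rw [← add_sum_erase _ f hi₂, hf₂] at hrest
      omega
    have hzero := (sum_eq_zero_iff_of_nonpos fun i hi => hle i (mem_of_mem_erase hi)).mp hrest₂
    refine Or.inr ⟨i₁, hi₁, i₂, mem_of_mem_erase hi₂, (ne_of_mem_erase hi₂).symm, hf₁, hf₂,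
      fun i hi h₁ h₂ => hzero i (mem_erase.mpr ⟨h₂, mem_erase.mpr ⟨h₁, hi⟩⟩)⟩
  · push Not at hpos
    refine Or.inl ((sum_eq_zero_iff_of_nonpos fun i hi => ?_).mp hsum)
    have := abs_le.mp (habs i hi)
    have := hpos i hi
    omega

theorem Finset.card_filter_ne_zero_le_two {ι M : Type*} [Zero M] [DecidableEq M] {s : Finset ι}
    {f : ι → M} {i₁ i₂ : ι} (h : ∀ i ∈ s, i ≠ i₁ → i ≠ i₂ → f i = 0) : #{i ∈ s | f i ≠ 0} ≤ 2 := by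
  classical
  calc #{i ∈ s | f i ≠ 0} ≤ #{i₁, i₂} := card_le_card fun i hi => by
        rw [mem_filter] at hi
        by_contra hne
        simp only [mem_insert, mem_singleton, not_or] at hne
        exact hi.2 (h i hi.1 hne.1 hne.2)
    _ ≤ 2 := card_le_two

section

variable {p q : ℕ}

theorem Nat.eq_of_mul_modEq_mul_of_coprime (hpq : p.Coprime q) {y y' : ℕ} (hy : y < p)
    (hy' : y' < p) (h : y * q ≡ y' * q [MOD p]) : y = y' :=
  (Nat.ModEq.cancel_right_of_coprime hpq h).eq_of_lt_of_lt hy hy'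

theorem grid_mod_mod_left (x y : ℕ) : (x * p + y * q) % (p * q) % p = y * q % p := by
  rw [Nat.mod_mul_right_mod, Nat.mul_add_mod_self_right]

theorem grid_eq_of_mod_eq (hpq : p.Coprime q) {x x' y y' : ℕ} (hx : x < q) (hx' : x' < q)
    (hy : y < p) (hy' : y' < p) (h : (x * p + y * q) % (p * q) = (x' * p + y' * q) % (p * q)) :
    x = x' ∧ y = y' := by
  have hmodq : x * p ≡ x' * p [MOD q] := by
    simpa [Nat.ModEq, Nat.mod_mul_left_mod] using congrArg (· % q) h
  have hmodp : y * q ≡ y' * q [MOD p] := by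
    simpa [Nat.ModEq, grid_mod_mod_left] using congrArg (· % p) h
  exact ⟨Nat.eq_of_mul_modEq_mul_of_coprime hpq.symm hx hx' hmodq,
    Nat.eq_of_mul_modEq_mul_of_coprime hpq hy hy' hmodp⟩

theorem exists_grid_mod_eq (hpq : p.Coprime q) {k : ℕ} (hk : k < p * q) :
    ∃ x < q, ∃ y < p, (x * p + y * q) % (p * q) = k := by
  have hpos : 0 < p * q := by omega
  obtain ⟨⟨x, y⟩, hxy, hk⟩ := surjOn_of_injOn_of_card_le
    (s := range q ×ˢ range p) (t := range (p * q)) (fun xy => (xy.1 * p + xy.2 * q) % (p * q))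
    (fun _ _ => mem_range.mpr (Nat.mod_lt _ hpos))
    (fun ⟨x, y⟩ hxy ⟨x', y'⟩ hxy' h => by
      simp only [coe_product, coe_range, Set.mem_prod, Set.mem_Iio] at hxy hxy'
      obtain ⟨rfl, rfl⟩ := grid_eq_of_mod_eq hpq hxy.1 hxy'.1 hxy.2 hxy'.2 h
      rfl)
    (by simp [mul_comm]) (mem_range.mpr hk)
  simp only [coe_product, coe_range, Set.mem_prod, Set.mem_Iio] at hxy
  exact ⟨x, hxy.1, y, hxy.2, hk⟩

theorem sub_one_mul_sub_one_add_add (hp : 0 < p) (hq : 0 < q) :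
    (p - 1) * (q - 1) + p + q = p * q + 1 := by
  obtain ⟨p, rfl⟩ := Nat.exists_eq_add_one_of_ne_zero hp.ne'
  obtain ⟨q, rfl⟩ := Nat.exists_eq_add_one_of_ne_zero hq.ne'
  simp only [Nat.add_sub_cancel]
  ring

theorem grid_mod_lt {x y : ℕ} (hx : x < q) (hy : y < p)
    (h : x * p + y * q < (p - 1) * (q - 1) ∨ p * q ≤ x * p + y * q) :
    (x * p + y * q) % (p * q) < (p - 1) * (q - 1) := by
  have hN := sub_one_mul_sub_one_add_add (p := p) (q := q) (by omega) (by omega)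
  have hxp : x * p + p ≤ p * q := by nlinarith
  have hyq : y * q + q ≤ p * q := by nlinarith
  rcases h with h | h
  · rwa [Nat.mod_eq_of_lt (by omega)]
  · rw [Nat.mod_eq_sub_mod h, Nat.mod_eq_of_lt (by omega)]
    omega

noncomputable def gridPoly (p q : ℕ) (c : ℕ → ℕ → ℤ) : ℤ[X] :=
  ∑ x ∈ range q, ∑ y ∈ range p, C (c x y) * X ^ ((x * p + y * q) % (p * q))

theorem coeff_gridPoly (hpq : p.Coprime q) (c : ℕ → ℕ → ℤ) {a b : ℕ} (ha : a < q) (hb : b < p) :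
    (gridPoly p q c).coeff ((a * p + b * q) % (p * q)) = c a b := by
  simp only [gridPoly, finsetSum_coeff, coeff_C_mul_X_pow]
  rw [sum_eq_single_of_mem a (mem_range.mpr ha), sum_eq_single_of_mem b (mem_range.mpr hb),
    if_pos rfl]
  · intro y hy hyb
    rw [if_neg fun h => hyb (grid_eq_of_mod_eq hpq ha ha hb (mem_range.mp hy) h).2.symm]
  · intro x hx hxa
    refine sum_eq_zero fun y hy => ?_
    rw [if_neg fun h =>
      hxa (grid_eq_of_mod_eq hpq ha (mem_range.mp hx) hb (mem_range.mp hy) h).1.symm]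

theorem degree_gridPoly_lt (c : ℕ → ℕ → ℤ) {n : ℕ}
    (hc : ∀ x < q, ∀ y < p, c x y ≠ 0 → (x * p + y * q) % (p * q) < n) :
    (gridPoly p q c).degree < n := by
  refine (degree_lt_iff_coeff_zero _ _).mpr fun m hm => ?_
  simp only [gridPoly, finsetSum_coeff, coeff_C_mul_X_pow]
  refine sum_eq_zero fun x hx => sum_eq_zero fun y hy => ite_eq_right_iff.mpr fun hmxy => ?_
  by_contra hne
  have := hc x (mem_range.mp hx) y (mem_range.mp hy) hne
  omega

theorem cyclotomic_mul_dvd_sum_range_X_pow_mul {R : Type*} [CommRing R] (hp : p.Prime)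
    (hq : q.Prime) (hpq : p ≠ q) : cyclotomic (p * q) R ∣ ∑ i ∈ range q, X ^ (i * p) := by
  have hexpand : expand R p (cyclotomic q R) = ∑ i ∈ range q, X ^ (i * p) := by
    have := Fact.mk hq
    simp [cyclotomic_prime, ← pow_mul, mul_comm]
  rw [← hexpand, cyclotomic_expand_eq_cyclotomic_mul hp
    fun h => hpq ((Nat.prime_dvd_prime_iff_eq hp hq).mp h), mul_comm q p]
  exact dvd_mul_right _ _

local notation "ζ" => AdjoinRoot.root (cyclotomic (p * q) ℤ)

theorem root_pow_mul_eq_one : ζ ^ (p * q) = 1 := by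
  simpa [sub_eq_zero] using AdjoinRoot.mk_eq_zero.mpr (cyclotomic.dvd_X_pow_sub_one (p * q) ℤ)

theorem mk_gridPoly (hp : p.Prime) (hq : q.Prime) (hpq : p ≠ q) {α β : ℕ} (hα : α < q)
    (hβ : β < p) (g h : ℕ → ℤ) :
    AdjoinRoot.mk (cyclotomic (p * q) ℤ)
        (gridPoly p q fun x y => (if x = α ∧ y = β then 1 else 0) + g x + h y) =
      ζ ^ (α * p + β * q) := by
  have hrow : ∑ x ∈ range q, ζ ^ (x * p) = 0 := by
    simpa [map_sum] using
      AdjoinRoot.mk_eq_zero.mpr (cyclotomic_mul_dvd_sum_range_X_pow_mul (R := ℤ) hp hq hpq)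
  have hcol : ∑ y ∈ range p, ζ ^ (y * q) = 0 := by
    have := cyclotomic_mul_dvd_sum_range_X_pow_mul (R := ℤ) hq hp hpq.symm
    rw [mul_comm q p] at this
    simpa [map_sum] using AdjoinRoot.mk_eq_zero.mpr this
  simp only [gridPoly, map_sum, map_mul, AdjoinRoot.mk_C, map_pow, AdjoinRoot.mk_X,
    ← pow_eq_pow_mod _ root_pow_mul_eq_one, pow_add, map_add, add_mul, sum_add_distrib]
  have hδ : ∑ x ∈ range q, ∑ y ∈ range p, AdjoinRoot.of _ (if x = α ∧ y = β then 1 else 0) *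
      (ζ ^ (x * p) * ζ ^ (y * q)) = ζ ^ (α * p) * ζ ^ (β * q) := by
    simp [ite_and, hα, hβ]
  have hg : ∑ x ∈ range q, ∑ y ∈ range p,
      AdjoinRoot.of _ (g x) * (ζ ^ (x * p) * ζ ^ (y * q)) = 0 := by
    simp [← mul_assoc, ← mul_sum, hcol]
  have hh : ∑ x ∈ range q, ∑ y ∈ range p,
      AdjoinRoot.of _ (h y) * (ζ ^ (x * p) * ζ ^ (y * q)) = 0 := by
    rw [sum_comm]
    simp [mul_left_comm _ (ζ ^ _), ← sum_mul, hrow]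
  rw [hδ, hg, hh, add_zero, add_zero]

theorem coeff_X_pow_modByMonic_cyclotomic_s17 (hp : p.Prime) (hq : q.Prime) (hpq : p ≠ q)
    {α β a b : ℕ} (hα : α < q) (hβ : β < p) (ha : a < q) (hb : b < p) (g h : ℕ → ℤ)
    (hsupp : ∀ x < q, ∀ y < p, (if x = α ∧ y = β then 1 else 0) + g x + h y ≠ 0 →
      x * p + y * q < (p - 1) * (q - 1) ∨ p * q ≤ x * p + y * q) :
    (X ^ ((α * p + β * q) % (p * q)) %ₘ cyclotomic (p * q) ℤ).coeff ((a * p + b * q) % (p * q)) =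
      (if a = α ∧ b = β then 1 else 0) + g a + h b := by
  have hcop : p.Coprime q := (Nat.coprime_primes hp hq).mpr hpq
  have hmonic := cyclotomic.monic (p * q) ℤ
  have hdeg : (gridPoly p q fun x y => (if x = α ∧ y = β then 1 else 0) + g x + h y).degree <
      (cyclotomic (p * q) ℤ).degree := by
    rw [degree_cyclotomic, Nat.totient_mul hcop, Nat.totient_prime hp, Nat.totient_prime hq]
    exact degree_gridPoly_lt _ fun x hx y hy hne => grid_mod_lt hx hy (hsupp x hx y hy hne)
  have hmk : AdjoinRoot.mk (cyclotomic (p * q) ℤ) (X ^ ((α * p + β * q) % (p * q))) =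
      AdjoinRoot.mk _ (gridPoly p q fun x y => (if x = α ∧ y = β then 1 else 0) + g x + h y) := by
    rw [mk_gridPoly hp hq hpq hα hβ, map_pow, AdjoinRoot.mk_X,
      ← pow_eq_pow_mod _ root_pow_mul_eq_one]
  rw [modByMonic_eq_of_dvd_sub hmonic (AdjoinRoot.mk_eq_mk.mp hmk),
    (modByMonic_eq_self_iff hmonic).mpr hdeg, coeff_gridPoly hcop _ ha hb]

theorem coeff_X_pow_modByMonic_cyclotomic_of_lt_add_left (hp : p.Prime) (hq : q.Prime)
    (hpq : p < q) {α β a b : ℕ} (hα : α < q) (hβ : β < p) (ha : a < q) (hb : b < p)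
    (hlo : (p - 1) * (q - 1) ≤ α * p + β * q) (hhi : α * p + β * q < (p - 1) * (q - 1) + p) :
    (X ^ (α * p + β * q) %ₘ cyclotomic (p * q) ℤ).coeff ((a * p + b * q) % (p * q)) =
      (if a = α ∧ b = β then 1 else 0) + (if α < a then 1 else 0) - (if b ≤ β then 1 else 0) := by
  have hN := sub_one_mul_sub_one_add_add hp.pos hq.pos
  rw [← Nat.mod_eq_of_lt (show α * p + β * q < p * q by omega), sub_eq_add_neg,
    coeff_X_pow_modByMonic_cyclotomic_s17 hp hq hpq.ne hα hβ ha hb _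
      (fun y => -(if y ≤ β then 1 else 0))]
  intro x hx y hy hne
  split_ifs at hne <;> first | omega | skip
  · right; nlinarith
  · left
    rcases Nat.lt_or_ge x α with hxα | hxα
    · nlinarith
    · have hyβ : y < β := by omega
      nlinarith

theorem coeff_X_pow_modByMonic_cyclotomic_of_lt_add_right (hp : p.Prime) (hq : q.Prime)
    (hpq : p ≠ q) {α β a b : ℕ} (hα : α < q) (hβ : β < p) (ha : a < q) (hb : b < p)
    (hlo : (p - 1) * (q - 1) + p ≤ α * p + β * q) (hhi : α * p + β * q < (p - 1) * (q - 1) + q) :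
    (X ^ (α * p + β * q) %ₘ cyclotomic (p * q) ℤ).coeff ((a * p + b * q) % (p * q)) =
      (if a = α ∧ b = β then 1 else 0) - (if a = α then 1 else 0) := by
  have hN := sub_one_mul_sub_one_add_add hp.pos hq.pos
  rw [← Nat.mod_eq_of_lt (show α * p + β * q < p * q by omega),
    coeff_X_pow_modByMonic_cyclotomic_s17 hp hq hpq hα hβ ha hb (fun x => -(if x = α then 1 else 0))
      (fun _ => 0), add_zero, sub_eq_add_neg]
  intro x hx y hy hne
  obtain ⟨rfl, hyβ⟩ : x = α ∧ y ≠ β := by split_ifs at hne <;> simp_all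
  rcases Nat.lt_or_gt_of_ne hyβ with hyβ | hyβ
  · left; nlinarith
  · right; nlinarith

theorem coeff_X_pow_modByMonic_cyclotomic_of_add_right_le (hp : p.Prime) (hq : q.Prime)
    (hpq : p < q) {α β a b : ℕ} (hα : α < q) (hβ : β < p) (ha : a < q) (hb : b < p)
    (hlo : (p - 1) * (q - 1) + q ≤ α * p + β * q) (hhi : α * p + β * q < p * q) :
    (X ^ (α * p + β * q) %ₘ cyclotomic (p * q) ℤ).coeff ((a * p + b * q) % (p * q)) =
      (if a = α ∧ b = β then 1 else 0) - (if α ≤ a then 1 else 0) + (if b < β then 1 else 0) := by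
  have hN := sub_one_mul_sub_one_add_add hp.pos hq.pos
  rw [← Nat.mod_eq_of_lt hhi, sub_eq_add_neg,
    coeff_X_pow_modByMonic_cyclotomic_s17 hp hq hpq.ne hα hβ ha hb _ (fun y => if y < β then 1 else 0)]
  intro x hx y hy hne
  split_ifs at hne <;> first | omega | skip
  · right
    rcases Nat.lt_or_ge α x with hxα | hxα
    · nlinarith
    · have hyβ : β < y := by omega
      nlinarith
  · left; nlinarith

theorem abs_coeff_X_pow_modByMonic_cyclotomic_le_one_and_eq_one_imp (hp : p.Prime)
    (hq : q.Prime) (hpq : p < q) {α β a b m k : ℕ} (hα : α < q) (hβ : β < p) (ha : a < q)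
    (hb : b < p) (hm : (α * p + β * q) % (p * q) = m) (hk : (a * p + b * q) % (p * q) = k)
    (hkN : k < (p - 1) * (q - 1)) :
    |(X ^ m %ₘ cyclotomic (p * q) ℤ).coeff k| ≤ 1 ∧
      ((X ^ m %ₘ cyclotomic (p * q) ℤ).coeff k = 1 →
        (b = β ∧ m = k) ∨
        (β < b ∧ m ∈ Ico ((p - 1) * (q - 1)) ((p - 1) * (q - 1) + p)) ∨
        (b < β ∧ m ∈ Ico ((p - 1) * (q - 1) + q) ((p - 1) * (q - 1) + q + p))) := by
  have hN := sub_one_mul_sub_one_add_add hp.pos hq.pos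
  subst hk
  by_cases hsmall : α * p + β * q < (p - 1) * (q - 1) ∨ p * q ≤ α * p + β * q
  · subst hm
    rw [coeff_X_pow_modByMonic_cyclotomic_s17 hp hq hpq.ne hα hβ ha hb 0 0
      fun x _ y _ hne => by
        obtain ⟨rfl, rfl⟩ : x = α ∧ y = β := by simpa using hne
        exact hsmall]
    refine ⟨by split_ifs <;> simp, fun h => Or.inl ?_⟩
    obtain ⟨rfl, rfl⟩ : a = α ∧ b = β := by simpa using h
    exact ⟨rfl, rfl⟩
  push Not at hsmall
  rw [Nat.mod_eq_of_lt hsmall.2] at hm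
  subst hm
  have hne : ¬(a = α ∧ b = β) := by
    rintro ⟨rfl, rfl⟩
    rw [Nat.mod_eq_of_lt hsmall.2] at hkN
    omega
  simp only [mem_Ico]
  rcases Nat.lt_or_ge (α * p + β * q) ((p - 1) * (q - 1) + p) with h₁ | h₁
  · rw [coeff_X_pow_modByMonic_cyclotomic_of_lt_add_left hp hq hpq hα hβ ha hb hsmall.1 h₁,
      if_neg hne, zero_add]
    refine ⟨by split_ifs <;> simp, fun h => ?_⟩
    split_ifs at h <;> omega
  rcases Nat.lt_or_ge (α * p + β * q) ((p - 1) * (q - 1) + q) with h₂ | h₂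
  · rw [coeff_X_pow_modByMonic_cyclotomic_of_lt_add_right hp hq hpq.ne hα hβ ha hb h₁ h₂,
      if_neg hne, zero_sub]
    exact ⟨by split_ifs <;> simp, fun h => absurd h (by split_ifs <;> simp)⟩
  · rw [coeff_X_pow_modByMonic_cyclotomic_of_add_right_le hp hq hpq hα hβ ha hb h₂ hsmall.2,
      if_neg hne, zero_sub]
    refine ⟨by split_ifs <;> simp, fun h => ?_⟩
    split_ifs at h <;> omega

theorem abs_coeff_X_pow_modByMonic_cyclotomic_le_one (hp : p.Prime) (hq : q.Prime)
    (hpq : p < q) {m k : ℕ} (hm : m < p * q) (hk : k < (p - 1) * (q - 1)) :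
    |(X ^ m %ₘ cyclotomic (p * q) ℤ).coeff k| ≤ 1 := by
  have hcop : p.Coprime q := (Nat.coprime_primes hp hq).mpr hpq.ne
  obtain ⟨a, ha, b, hb, hab⟩ := exists_grid_mod_eq hcop (show k < p * q by
    have := sub_one_mul_sub_one_add_add hp.pos hq.pos; omega)
  obtain ⟨α, hα, β, hβ, hαβ⟩ := exists_grid_mod_eq hcop hm
  exact (abs_coeff_X_pow_modByMonic_cyclotomic_le_one_and_eq_one_imp hp hq hpq
    hα hβ ha hb hαβ hab hk).1

theorem eq_of_add_mul_mem_Ico {j i i' lo : ℕ} (h : j + i * p ∈ Ico lo (lo + p))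
    (h' : j + i' * p ∈ Ico lo (lo + p)) : i = i' := by
  rw [mem_Ico] at h h'
  by_contra! hne
  rcases hne.lt_or_gt with hlt | hlt
  · nlinarith [Nat.mul_le_mul_right p hlt]
  · nlinarith [Nat.mul_le_mul_right p hlt]

theorem eq_of_coeff_X_pow_add_mul_modByMonic_cyclotomic_eq_one (hp : p.Prime) (hq : q.Prime)
    (hpq : p < q) {j k i i' : ℕ} (hj : j < p) (hk : k < (p - 1) * (q - 1)) (hi : i < q)
    (hi' : i' < q) (h : (X ^ (j + i * p) %ₘ cyclotomic (p * q) ℤ).coeff k = 1)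
    (h' : (X ^ (j + i' * p) %ₘ cyclotomic (p * q) ℤ).coeff k = 1) : i = i' := by
  have hcop : p.Coprime q := (Nat.coprime_primes hp hq).mpr hpq.ne
  have hN := sub_one_mul_sub_one_add_add hp.pos hq.pos
  have hp0 := hp.pos
  have hcol : ∀ {i}, i < q → j + i * p < p * q := fun hi => by nlinarith
  obtain ⟨a, ha, b, hb, hab⟩ := exists_grid_mod_eq hcop (show k < p * q by omega)
  obtain ⟨α, hα, β, hβ, hm⟩ := exists_grid_mod_eq hcop (hcol hi)
  obtain ⟨α', hα', β', hβ', hm'⟩ := exists_grid_mod_eq hcop (hcol hi')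
  have hββ' : β = β' := by
    refine Nat.eq_of_mul_modEq_mul_of_coprime hcop hβ hβ' ?_
    have e := congrArg (· % p) hm
    have e' := congrArg (· % p) hm'
    simp only [grid_mod_mod_left, Nat.add_mul_mod_self_right] at e e'
    exact e.trans e'.symm
  subst hββ'
  have hw := (abs_coeff_X_pow_modByMonic_cyclotomic_le_one_and_eq_one_imp hp hq hpq
    hα hβ ha hb hm hab hk).2 h
  have hw' := (abs_coeff_X_pow_modByMonic_cyclotomic_le_one_and_eq_one_imp hp hq hpq
    hα' hβ ha hb hm' hab hk).2 h'
  rcases hw with ⟨hbβ, hw⟩ | ⟨hbβ, hw⟩ | ⟨hbβ, hw⟩ <;>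
    rcases hw' with ⟨hbβ', hw'⟩ | ⟨hbβ', hw'⟩ | ⟨hbβ', hw'⟩
  -- in the mixed cases the comparisons of `b` with `β` contradict each other
  all_goals first
    | omega
    | exact Nat.eq_of_mul_eq_mul_right hp.pos (by omega)
    | exact eq_of_add_mul_mem_Ico hw hw'

theorem sum_coeff_X_pow_add_mul_modByMonic_cyclotomic (hp : p.Prime) (hq : q.Prime) (hpq : p ≠ q)
    (j k : ℕ) : ∑ i ∈ range q, (X ^ (j + i * p) %ₘ cyclotomic (p * q) ℤ).coeff k = 0 := by
  have hdvd : cyclotomic (p * q) ℤ ∣ ∑ i ∈ range q, X ^ (j + i * p) := by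
    simp only [pow_add, ← mul_sum]
    exact dvd_mul_of_dvd_right (cyclotomic_mul_dvd_sum_range_X_pow_mul hp hq hpq) _
  have hmod := map_sum (modByMonicHom (cyclotomic (p * q) ℤ)) (fun i => X ^ (j + i * p)) (range q)
  simp only [modByMonicHom_apply] at hmod
  rw [← finsetSum_coeff, ← hmod, (modByMonic_eq_zero_iff_dvd (cyclotomic.monic _ _)).mpr hdvd,
    coeff_zero]

end

theorem coeff_nonzero_at_most_two (p q k j : ℕ) (hp : p.Prime) (hq : q.Prime)
    (hpq : p < q) (hk : k < Nat.totient (p * q)) (hj : j < p) :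
    ((Finset.range q).filter
        (fun i => (X ^ (j + i * p) %ₘ cyclotomic (p * q) ℤ).coeff k ≠ 0)).card ≤ 2 ∧
    (∑ i ∈ Finset.range q, (X ^ (j + i * p) %ₘ cyclotomic (p * q) ℤ).coeff k) = 0 ∧
    ((∀ i < q, (X ^ (j + i * p) %ₘ cyclotomic (p * q) ℤ).coeff k = 0) ∨
      (∃ i₁ < q, ∃ i₂ < q, i₁ ≠ i₂ ∧
        (X ^ (j + i₁ * p) %ₘ cyclotomic (p * q) ℤ).coeff k = 1 ∧
        (X ^ (j + i₂ * p) %ₘ cyclotomic (p * q) ℤ).coeff k = -1 ∧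
        ∀ i < q, i ≠ i₁ → i ≠ i₂ →
          (X ^ (j + i * p) %ₘ cyclotomic (p * q) ℤ).coeff k = 0)) := by
  rw [Nat.totient_mul ((Nat.coprime_primes hp hq).mpr hpq.ne), Nat.totient_prime hp,
    Nat.totient_prime hq] at hk
  have hsum := sum_coeff_X_pow_add_mul_modByMonic_cyclotomic hp hq hpq.ne j k
  have hcases := forall_eq_zero_or_exists_eq_one_eq_neg_one (s := range q)
    (fun i hi => abs_coeff_X_pow_modByMonic_cyclotomic_le_one hp hq hpq
      (by have := mem_range.mp hi; nlinarith) hk)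
    hsum (fun i hi i' hi' => eq_of_coeff_X_pow_add_mul_modByMonic_cyclotomic_eq_one hp hq hpq hj hk
      (mem_range.mp hi) (mem_range.mp hi'))
  simp only [mem_range] at hcases
  refine ⟨?_, hsum, hcases⟩
  rcases hcases with hzero | ⟨i₁, -, i₂, -, -, -, -, hzero⟩
  · exact card_filter_ne_zero_le_two (i₁ := 0) (i₂ := 0) fun i hi _ _ => hzero i (mem_range.mp hi)
  · exact card_filter_ne_zero_le_two fun i hi => hzero i (mem_range.mp hi)
end
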